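/- arXiv:1805.03765 — 11 statements merged into one kernel-verified Lean document; each statement's English description precedes it below -/
import Mathlib

section
/- Let n ≥ 1, 0 < ε < 1, and 0 < β ≤ α be real numbers. Suppose S_1, S_2, …, S_s are symmetric positive semidefinite n×n real matrices such that (i) S_1 ⪰ S_2 ⪰ … ⪰ S_s in the Loewner order, (ii) every eigenvalue of every S_i is either 0 or lies in the interval [β, α], and (iii) for every 1 ≤ i ≤ s−2 it is NOT the case that (1−ε)·S_i ⪯ S_{i+2}. Then s ≤ 2 + (4n/ε)·ln(2α/β); in particular s = O((n/ε)·log(α/β)). -/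
/-!
The potential `log det (S + β • 1)` of a matrix in the chain lies between `n log β` and
`n log (2α)`, and it drops by at least `ε / 2` every two steps. Indeed, if `0 ≤ B ≤ A` with
`A` positive definite then `(det B / det A) • A ≤ B`, because the eigenvalues of
`A^{-1/2} B A^{-1/2}` lie in `[0, 1]`, so each dominates their product. Were
`det (S_{i+2} + β) > (1 - ε/2) det (S_i + β)`, this would give
`(1 - ε/2) • (S_i + β) ≤ S_{i+2} + β`; on the range of `S_i`, where `S_i ≥ β`, this turns into
`(1 - ε) • S_i ≤ S_{i+2}`, and on the kernel of `S_i` both sides vanish.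
-/

open Matrix
open scoped MatrixOrder

lemma le_one_sub_pow_mul_of_two_step {s : ℕ} {x : Fin s → ℝ} {δ : ℝ} (hδ : δ ≤ 1)
    (hstep : ∀ (i : Fin s) (h : (i : ℕ) + 2 < s), x ⟨i + 2, h⟩ ≤ (1 - δ) * x i) :
    ∀ (k : ℕ) (hk : 2 * k < s), x ⟨2 * k, hk⟩ ≤ (1 - δ) ^ k * x ⟨0, by omega⟩
  | 0, _ => by simp
  | k + 1, hk =>
    calc x ⟨2 * k + 2, hk⟩ ≤ (1 - δ) * x ⟨2 * k, by omega⟩ := hstep ⟨2 * k, by omega⟩ hk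
      _ ≤ (1 - δ) * ((1 - δ) ^ k * x ⟨0, by omega⟩) :=
        mul_le_mul_of_nonneg_left (le_one_sub_pow_mul_of_two_step hδ hstep k _) (by linarith)
      _ = (1 - δ) ^ (k + 1) * x ⟨0, by omega⟩ := by ring

lemma card_le_of_two_step_contraction {s : ℕ} {x : Fin s → ℝ} {lo hi δ : ℝ} (hlo : 0 < lo)
    (hlohi : lo ≤ hi) (hx : ∀ i, x i ∈ Set.Icc lo hi) (hδ0 : 0 < δ) (hδ1 : δ ≤ 1)
    (hstep : ∀ (i : Fin s) (h : (i : ℕ) + 2 < s), x ⟨i + 2, h⟩ ≤ (1 - δ) * x i) :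
    (s : ℝ) ≤ 2 + 2 / δ * Real.log (hi / lo) := by
  have hlog : 0 ≤ Real.log (hi / lo) := Real.log_nonneg ((one_le_div hlo).2 hlohi)
  rcases Nat.eq_zero_or_pos s with rfl | hs
  · simp only [CharP.cast_eq_zero]
    positivity
  set k := (s - 1) / 2
  have hk : 2 * k < s := by omega
  have hsk : (s : ℝ) ≤ 2 * k + 2 := by exact_mod_cast (by omega : s ≤ 2 * k + 2)
  have hdecay : lo ≤ Real.exp (-(δ * k)) * hi :=
    calc lo ≤ x ⟨2 * k, hk⟩ := (hx _).1
      _ ≤ (1 - δ) ^ k * x ⟨0, hs⟩ := le_one_sub_pow_mul_of_two_step hδ1 hstep k hk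
      _ ≤ Real.exp (-δ) ^ k * hi :=
        mul_le_mul (pow_le_pow_left₀ (by linarith) (Real.one_sub_le_exp_neg δ) k) (hx _).2
          (hlo.le.trans (hx _).1) (by positivity)
      _ = Real.exp (-(δ * k)) * hi := by rw [← Real.exp_nat_mul]; ring_nf
  have hk_log : δ * k ≤ Real.log (hi / lo) := by
    rw [Real.le_log_iff_exp_le (div_pos (hlo.trans_le hlohi) hlo), le_div_iff₀ hlo]
    calc Real.exp (δ * k) * lo ≤ Real.exp (δ * k) * (Real.exp (-(δ * k)) * hi) := by gcongr
      _ = hi := by rw [← mul_assoc, ← Real.exp_add, add_neg_cancel, Real.exp_zero, one_mul]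
  calc (s : ℝ) ≤ 2 + 2 / δ * (δ * k) := by field_simp; linarith
    _ ≤ 2 + 2 / δ * Real.log (hi / lo) := by gcongr

namespace Matrix

variable {ι : Type*} [Fintype ι]

lemma IsHermitian.dotProduct_mulVec_add_of_mulVec_eq_zero {M : Matrix ι ι ℝ} (hM : M.IsHermitian)
    {d : ι → ℝ} (hd : M *ᵥ d = 0) (x : ι → ℝ) : (x + d) ⬝ᵥ M *ᵥ (x + d) = x ⬝ᵥ M *ᵥ x := by
  rw [mulVec_add, hd, add_zero, add_dotProduct, dotProduct_mulVec d, ← mulVec_transpose,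
    ← conjTranspose_eq_transpose_of_trivial, hM.eq, hd, zero_dotProduct, add_zero]

lemma mulVec_eq_zero_of_le {S T : Matrix ι ι ℝ} (hT : 0 ≤ T) (hTS : T ≤ S) {d : ι → ℝ}
    (hd : S *ᵥ d = 0) : T *ᵥ d = 0 := by
  have hT_form : 0 ≤ d ⬝ᵥ T *ᵥ d := by simpa using hT.posSemidef.dotProduct_mulVec_nonneg d
  have hST_form : 0 ≤ d ⬝ᵥ (S - T) *ᵥ d := by
    simpa using (le_iff.mp hTS).dotProduct_mulVec_nonneg d
  rw [sub_mulVec, dotProduct_sub, hd, dotProduct_zero] at hST_form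
  simpa using (hT.posSemidef.dotProduct_mulVec_zero_iff d).mp (by rw [star_trivial]; linarith)

variable [DecidableEq ι]

lemma mulVec_dotProduct_mulVec_of_mem_unitaryGroup {U : Matrix ι ι ℝ} (hU : U ∈ unitaryGroup ι ℝ)
    (a b : ι → ℝ) : U *ᵥ a ⬝ᵥ U *ᵥ b = a ⬝ᵥ b := by
  rw [dotProduct_mulVec, ← mulVec_transpose, mulVec_mulVec,
    ← conjTranspose_eq_transpose_of_trivial, ← star_eq_conjTranspose,
    mem_unitaryGroup_iff'.mp hU, one_mulVec]

lemma IsHermitian.det_add_smul_one {S : Matrix ι ι ℝ} (hS : S.IsHermitian) (c : ℝ) :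
    (S + c • 1).det = ∏ i, (hS.eigenvalues i + c) := by
  have hcfc : S + c • 1 = cfc (· + c) S := by
    rw [cfc_add_const c (fun x => x) S, cfc_id' ℝ S, Algebra.algebraMap_eq_smul_one]
  rw [hcfc, hS.cfc_eq]
  simp [IsHermitian.cfc, -Unitary.conjStarAlgAut_apply]

lemma PosSemidef.pow_card_le_det_add_smul_one {S : Matrix ι ι ℝ} (hS : S.PosSemidef) {c : ℝ}
    (hc : 0 ≤ c) : c ^ Fintype.card ι ≤ (S + c • 1).det := by
  rw [hS.isHermitian.det_add_smul_one, ← Finset.card_univ, ← Finset.prod_const]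
  exact Finset.prod_le_prod (fun _ _ => hc) fun i _ =>
    le_add_of_nonneg_left (hS.eigenvalues_nonneg i)

lemma PosSemidef.det_add_smul_one_le_pow_card {S : Matrix ι ι ℝ} (hS : S.PosSemidef) {a c : ℝ}
    (hc : 0 ≤ c) (ha : ∀ i, hS.isHermitian.eigenvalues i ≤ a) :
    (S + c • 1).det ≤ (a + c) ^ Fintype.card ι := by
  rw [hS.isHermitian.det_add_smul_one, ← Finset.card_univ, ← Finset.prod_const]
  exact Finset.prod_le_prod (fun i _ => add_nonneg (hS.eigenvalues_nonneg i) hc)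
    fun i _ => add_le_add_left (ha i) c

lemma det_smul_one_le {M : Matrix ι ι ℝ} (h0 : 0 ≤ M) (h1 : M ≤ 1) :
    M.det • (1 : Matrix ι ι ℝ) ≤ M := by
  have hM : M.IsHermitian := h0.posSemidef.isHermitian
  have hsa : IsSelfAdjoint M := hM
  have heig : ∀ i, hM.eigenvalues i ∈ Set.Icc 0 1 := fun i =>
    ⟨h0.posSemidef.eigenvalues_nonneg i,
      (le_algebraMap_iff_spectrum_le hsa).mp (by rwa [map_one]) _
        (hM.eigenvalues_mem_spectrum_real i)⟩
  rw [← Algebra.algebraMap_eq_smul_one, algebraMap_le_iff_le_spectrum hsa,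
    hM.spectrum_real_eq_range_eigenvalues]
  rintro _ ⟨i, rfl⟩
  have hprod := Finset.prod_le_prod_of_subset_of_le_one (Finset.subset_univ {i})
    (fun j _ => (heig j).1) (fun j _ _ => (heig j).2)
  simpa [hM.det_eq_prod_eigenvalues] using hprod

lemma det_div_det_smul_le {A B : Matrix ι ι ℝ} (hA : A.PosDef) (hB : 0 ≤ B) (hBA : B ≤ A) :
    (B.det / A.det) • A ≤ B := by
  set P := CFC.sqrt A
  have hPP : P * P = A := CFC.sqrt_mul_sqrt_self A hA.posSemidef.nonneg
  have hPstar : star P = P := (CFC.sqrt_nonneg A).isSelfAdjoint.star_eq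
  have hdetP : P.det * P.det = A.det := by rw [← det_mul, hPP]
  have hPunit : IsUnit P.det :=
    isUnit_iff_ne_zero.mpr (left_ne_zero_of_mul (hdetP ▸ hA.det_pos.ne'))
  set Q := P⁻¹
  have hPQ : P * Q = 1 := mul_nonsing_inv P hPunit
  have hQP : Q * P = 1 := nonsing_inv_mul P hPunit
  have hQstar : star Q = Q := by
    rw [star_eq_conjTranspose, conjTranspose_nonsing_inv, ← star_eq_conjTranspose, hPstar]
  set M := star Q * B * Q
  have hM1 : M ≤ 1 :=
    calc M ≤ star Q * A * Q := star_left_conjugate_le_conjugate hBA Q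
      _ = 1 := by rw [hQstar, ← hPP, mul_assoc, mul_assoc, hPQ, mul_one, hQP]
  have hdetM : M.det = B.det / A.det := by
    rw [← hdetP, det_mul, det_mul, hQstar, det_nonsing_inv, Ring.inverse_eq_inv']
    field_simp
  have hPMP : star P * M * P = B := by
    simp only [M, hPstar, hQstar, ← mul_assoc, hPQ, one_mul]
    rw [mul_assoc, hQP, mul_one]
  calc (B.det / A.det) • A = star P * (M.det • 1) * P := by
        rw [hdetM, mul_smul_comm, smul_mul_assoc, mul_one, hPstar, hPP]
    _ ≤ star P * M * P :=
      star_left_conjugate_le_conjugate (det_smul_one_le (star_left_conjugate_nonneg hB Q) hM1) P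
    _ = B := hPMP

lemma IsHermitian.exists_mulVec_sub_eq_zero_and_le {S : Matrix ι ι ℝ} (hS : S.IsHermitian)
    {β : ℝ} (hβ : ∀ i, hS.eigenvalues i = 0 ∨ β ≤ hS.eigenvalues i) (w : ι → ℝ) :
    ∃ x, S *ᵥ (w - x) = 0 ∧ β * (x ⬝ᵥ x) ≤ x ⬝ᵥ S *ᵥ x := by
  set U : Matrix ι ι ℝ := ↑hS.eigenvectorUnitary
  have hU : U ∈ unitaryGroup ι ℝ := hS.eigenvectorUnitary.2
  have hS_mulVec : ∀ v, S *ᵥ v = U *ᵥ (diagonal hS.eigenvalues *ᵥ (star U *ᵥ v)) := by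
    intro v
    conv_lhs => rw [hS.spectral_theorem, Unitary.conjStarAlgAut_apply]
    simp [U, mulVec_mulVec, Matrix.mul_assoc]
  have hUU : ∀ v, star U *ᵥ (U *ᵥ v) = v := fun v => by
    rw [mulVec_mulVec, mem_unitaryGroup_iff'.mp hU, one_mulVec]
  set z := star U *ᵥ w
  -- the witness is the component of `w` along the eigenvectors with nonzero eigenvalue
  set y : ι → ℝ := fun i => if hS.eigenvalues i = 0 then 0 else z i
  refine ⟨U *ᵥ y, ?_, ?_⟩
  · have hker : diagonal hS.eigenvalues *ᵥ (z - y) = 0 := by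
      ext i
      by_cases hi : hS.eigenvalues i = 0 <;> simp [y, hi, mulVec_diagonal]
    rw [hS_mulVec, mulVec_sub, hUU, hker, mulVec_zero]
  · rw [hS_mulVec, hUU, mulVec_dotProduct_mulVec_of_mem_unitaryGroup hU,
      mulVec_dotProduct_mulVec_of_mem_unitaryGroup hU]
    simp only [dotProduct, mulVec_diagonal, Finset.mul_sum]
    refine Finset.sum_le_sum fun i _ => ?_
    rcases hβ i with hi | hi
    · simp [y, hi]
    · nlinarith [mul_self_nonneg (y i)]

lemma le_of_smul_add_smul_one_le {S T : Matrix ι ι ℝ} (hS : S.IsHermitian) {β c : ℝ}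
    (hβ : ∀ i, hS.eigenvalues i = 0 ∨ β ≤ hS.eigenvalues i) (hT : 0 ≤ T) (hTS : T ≤ S)
    (hc : c ≤ 1) (h : c • (S + β • 1) ≤ T + β • 1) : (2 * c - 1) • S ≤ T := by
  refine le_iff.mpr (.of_dotProduct_mulVec_nonneg
    (hT.posSemidef.isHermitian.sub (hS.smul (.all _))) fun w => ?_)
  obtain ⟨x, hSx, hxβ⟩ := hS.exists_mulVec_sub_eq_zero_and_le hβ w
  have hTx := mulVec_eq_zero_of_le hT hTS hSx
  have hx := (le_iff.mp h).dotProduct_mulVec_nonneg x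
  rw [← add_sub_cancel x w]
  simp only [star_trivial, sub_mulVec, add_mulVec, smul_mulVec, one_mulVec, dotProduct_sub,
    dotProduct_add, dotProduct_smul, smul_eq_mul] at hx ⊢
  rw [hS.dotProduct_mulVec_add_of_mulVec_eq_zero hSx,
    hT.posSemidef.isHermitian.dotProduct_mulVec_add_of_mulVec_eq_zero hTx]
  nlinarith [mul_nonneg (sub_nonneg.2 hc) (sub_nonneg.2 hxβ)]

lemma det_add_smul_one_le_of_not_le {S T : Matrix ι ι ℝ} (hS : S.IsHermitian) {β ε : ℝ}
    (hβ0 : 0 < β) (hβ : ∀ i, hS.eigenvalues i = 0 ∨ β ≤ hS.eigenvalues i) (hT : 0 ≤ T)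
    (hTS : T ≤ S) (hε : 0 ≤ ε) (hsep : ¬ (1 - ε) • S ≤ T) :
    (T + β • 1).det ≤ (1 - ε / 2) * (S + β • 1).det := by
  by_contra! hlt
  have hA : (S + β • 1).PosDef := .posSemidef_add (hT.trans hTS).posSemidef (PosDef.one.smul hβ0)
  have hB : 0 ≤ T + β • 1 := add_nonneg hT (PosSemidef.one.smul hβ0.le).nonneg
  have hc : 1 - ε / 2 ≤ (T + β • 1).det / (S + β • 1).det := (le_div_iff₀ hA.det_pos).2 hlt.le
  have hcAB := (smul_le_smul_of_nonneg_right hc hA.posSemidef.nonneg).trans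
    (det_div_det_smul_le hA hB (add_le_add_left hTS _))
  refine hsep ?_
  convert le_of_smul_add_smul_one_le hS hβ hT hTS (by linarith) hcAB using 2
  ring

end Matrix

theorem spectrogram_size_bound_general (n s : ℕ) (ε α β : ℝ)
    (hε0 : 0 < ε) (hε1 : ε < 1) (hβ0 : 0 < β) (hβα : β ≤ α)
    (S : Fin s → Matrix (Fin n) (Fin n) ℝ)
    (hPSD : ∀ i, (S i).PosSemidef)
    (hchain : ∀ (i : Fin s) (h : (i : ℕ) + 1 < s),
      (S i - S ⟨(i : ℕ) + 1, h⟩).PosSemidef)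
    (heig : ∀ (i : Fin s) (j : Fin n),
      (hPSD i).1.eigenvalues j = 0 ∨ (hPSD i).1.eigenvalues j ∈ Set.Icc β α)
    (hsep : ∀ (i : Fin s) (h : (i : ℕ) + 2 < s),
      ¬ (S ⟨(i : ℕ) + 2, h⟩ - (1 - ε) • S i).PosSemidef) :
    (s : ℝ) ≤ 2 + (4 * n / ε) * Real.log (2 * α / β) := by
  have hα : 0 ≤ α := hβ0.le.trans hβα
  have hle : ∀ (i : Fin s) (h : (i : ℕ) + 1 < s), S ⟨i + 1, h⟩ ≤ S i := hchain
  have hbounds : ∀ i, (S i + β • 1).det ∈ Set.Icc (β ^ n) ((2 * α) ^ n) := fun i => by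
    refine ⟨by simpa using (hPSD i).pow_card_le_det_add_smul_one hβ0.le, ?_⟩
    have hle_α : ∀ j, (hPSD i).isHermitian.eigenvalues j ≤ α := fun j =>
      (heig i j).elim (fun h => h ▸ hα) fun h => h.2
    calc (S i + β • 1).det ≤ (α + β) ^ n := by
          simpa using (hPSD i).det_add_smul_one_le_pow_card hβ0.le hle_α
      _ ≤ (2 * α) ^ n := pow_le_pow_left₀ (by positivity) (by linarith) n
  have hstep : ∀ (i : Fin s) (h : (i : ℕ) + 2 < s),
      (S ⟨i + 2, h⟩ + β • 1).det ≤ (1 - ε / 2) * (S i + β • 1).det := fun i h =>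
    det_add_smul_one_le_of_not_le (hPSD i).1 hβ0 (fun j => (heig i j).imp_right fun h => h.1)
      (hPSD _).nonneg ((hle ⟨i + 1, by omega⟩ h).trans (hle i (by omega))) hε0.le (hsep i h)
  calc (s : ℝ) ≤ 2 + 2 / (ε / 2) * Real.log ((2 * α) ^ n / β ^ n) :=
        card_le_of_two_step_contraction (pow_pos hβ0 n) (pow_le_pow_left₀ hβ0.le (by linarith) n)
          hbounds (by positivity) (by linarith) hstep
    _ = 2 + 4 * n / ε * Real.log (2 * α / β) := by
        rw [← div_pow, Real.log_pow]
        field_simp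
        ring

/-- **Spectrogram size bound.**
If `S 0 ⪰ S 1 ⪰ … ⪰ S (s-1)` are PSD `n × n` matrices whose nonzero eigenvalues all lie
in `[β, α]`, and for every `i ≤ s - 3` it is *not* the case that `(1-ε) • S i ⪯ S (i+2)`,
then `s ≤ 2 + (4n/ε) · ln(2α/β)`. -/
theorem spectrogram_size_bound (n s : ℕ) (hn : 1 ≤ n) (ε α β : ℝ)
    (hε0 : 0 < ε) (hε1 : ε < 1) (hβ0 : 0 < β) (hβα : β ≤ α)
    (S : Fin s → Matrix (Fin n) (Fin n) ℝ)
    (hPSD : ∀ i, (S i).PosSemidef)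
    (hchain : ∀ (i : Fin s) (h : (i : ℕ) + 1 < s),
      (S i - S ⟨(i : ℕ) + 1, h⟩).PosSemidef)
    (heig : ∀ (i : Fin s) (j : Fin n),
      (hPSD i).1.eigenvalues j = 0 ∨ (hPSD i).1.eigenvalues j ∈ Set.Icc β α)
    (hsep : ∀ (i : Fin s) (h : (i : ℕ) + 2 < s),
      ¬ (S ⟨(i : ℕ) + 2, h⟩ - (1 - ε) • S i).PosSemidef) :
    (s : ℝ) ≤ 2 + (4 * n / ε) * Real.log (2 * α / β) :=
  spectrogram_size_bound_general n s ε α β hε0 hε1 hβ0 hβα S hPSD hchain heig hsep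
end

section
/- Let r_1, …, r_t ∈ ℝ^{1×n} be row vectors, let 1 ≤ W ≤ t, let 0 ≤ ε < 1, and let t_1, t_2 be indices with 1 ≤ t_1 ≤ t−W+1 < t_2 ≤ t. Define S_1 = Σ_{k=t_1}^{t} r_kᵀ r_k, S_2 = Σ_{k=t_2}^{t} r_kᵀ r_k, and A = Σ_{k=t−W+1}^{t} r_kᵀ r_k. If either t_2 = t_1 + 1 or (1−ε)·S_1 ⪯ S_2 in the Loewner order, then (1−ε)·S_1 ⪯ A ⪯ S_1; that is, S_1 is a (1+ε)-spectral approximation of the Gram matrix A of the sliding window of size W. -/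
open Matrix
open scoped MatrixOrder

namespace Matrix

variable {m ι : Type*} [Fintype m]

theorem vecMulVec_self_nonneg (v : m → ℝ) : 0 ≤ vecMulVec v v := by
  simpa using (posSemidef_vecMulVec_self_star v).nonneg

theorem sum_vecMulVec_self_nonneg (r : ι → m → ℝ) (s : Finset ι) :
    0 ≤ ∑ k ∈ s, vecMulVec (r k) (r k) :=
  Finset.sum_nonneg fun k _ => vecMulVec_self_nonneg (r k)

theorem sum_vecMulVec_self_mono (r : ι → m → ℝ) {s u : Finset ι} (h : u ⊆ s) :
    ∑ k ∈ u, vecMulVec (r k) (r k) ≤ ∑ k ∈ s, vecMulVec (r k) (r k) :=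
  Finset.sum_le_sum_of_subset_of_nonneg h fun k _ _ => vecMulVec_self_nonneg (r k)

end Matrix

theorem spectral_histogram_invariant_general (n t W : ℕ) (r : ℕ → (Fin n → ℝ))
    (ε : ℝ) (hε0 : 0 ≤ ε)
    (t1 t2 : ℕ) (ht1W : t1 ≤ t - W + 1) (ht2W : t - W + 1 < t2)
    (S1 S2 A : Matrix (Fin n) (Fin n) ℝ)
    (hS1 : S1 = ∑ k ∈ Finset.Icc t1 t, vecMulVec (r k) (r k))
    (hS2 : S2 = ∑ k ∈ Finset.Icc t2 t, vecMulVec (r k) (r k))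
    (hA : A = ∑ k ∈ Finset.Icc (t - W + 1) t, vecMulVec (r k) (r k))
    (hcond : t2 = t1 + 1 ∨ (S2 - (1 - ε) • S1).PosSemidef) :
    (A - (1 - ε) • S1).PosSemidef ∧ (S1 - A).PosSemidef := by
  simp only [← Matrix.le_iff] at hcond ⊢
  have hAS1 : A ≤ S1 := by
    rw [hA, hS1]
    exact sum_vecMulVec_self_mono r (Finset.Icc_subset_Icc ht1W le_rfl)
  refine ⟨?_, hAS1⟩
  rcases hcond with rfl | hS1S2
  · obtain rfl : t1 = t - W + 1 := by omega
    rw [hA, ← hS1]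
    exact smul_le_of_le_one_left (hS1 ▸ sum_vecMulVec_self_nonneg r _) (by linarith)
  · calc (1 - ε) • S1 ≤ S2 := hS1S2
      _ ≤ A := by
        rw [hS2, hA]
        exact sum_vecMulVec_self_mono r (Finset.Icc_subset_Icc ht2W.le le_rfl)

/-- **Spectral histogram correctness invariant.**
With `S₁ = ∑_{k=t₁}^t rₖᵀrₖ`, `S₂ = ∑_{k=t₂}^t rₖᵀrₖ`, `A = ∑_{k=t-W+1}^t rₖᵀrₖ`,
if `t₁ ≤ t-W+1 < t₂` and either `t₂ = t₁+1` or `(1-ε) • S₁ ⪯ S₂`, then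
`(1-ε) • S₁ ⪯ A ⪯ S₁`. -/
theorem spectral_histogram_invariant (n t W : ℕ) (r : ℕ → (Fin n → ℝ))
    (hW1 : 1 ≤ W) (hWt : W ≤ t)
    (ε : ℝ) (hε0 : 0 ≤ ε) (hε1 : ε < 1)
    (t1 t2 : ℕ) (ht1 : 1 ≤ t1) (ht1W : t1 ≤ t - W + 1) (ht2W : t - W + 1 < t2)
    (ht2t : t2 ≤ t)
    (S1 S2 A : Matrix (Fin n) (Fin n) ℝ)
    (hS1 : S1 = ∑ k ∈ Finset.Icc t1 t, vecMulVec (r k) (r k))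
    (hS2 : S2 = ∑ k ∈ Finset.Icc t2 t, vecMulVec (r k) (r k))
    (hA : A = ∑ k ∈ Finset.Icc (t - W + 1) t, vecMulVec (r k) (r k))
    (hcond : t2 = t1 + 1 ∨ (S2 - (1 - ε) • S1).PosSemidef) :
    (A - (1 - ε) • S1).PosSemidef ∧ (S1 - A).PosSemidef :=
  spectral_histogram_invariant_general n t W r ε hε0 t1 t2 ht1W ht2W S1 S2 A hS1 hS2 hA hcond
end

section
/- Let ε ≥ 0 and λ ≥ 0, and let X, Y, Z, X̃, Ỹ, Ŷ, Ẑ be real matrices, each with n columns, with I the n×n identity. Suppose all of the following Loewner-order sandwiches hold: (1) (1−ε)(YᵀY+λI) ⪯ ỸᵀỸ+λI ⪯ (1+ε)(YᵀY+λI); (2) (1−ε)(XᵀX+YᵀY+λI) ⪯ X̃ᵀX̃+ỸᵀỸ+λI ⪯ (1+ε)(XᵀX+YᵀY+λI); (3) (1−ε)(YᵀY+ZᵀZ+λI) ⪯ ŶᵀŶ+ẐᵀẐ+λI ⪯ (1+ε)(YᵀY+ZᵀZ+λI). Then, setting G = XᵀX+YᵀY+ZᵀZ, one has (1−3ε)(G+λI)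 ⪯ X̃ᵀX̃+ŶᵀŶ+ẐᵀẐ+λI ⪯ (1+3ε)(G+λI). -/
open Matrix

/-!
Subtracting (1) from the sum of (2) and (3) isolates `X̃ᵀX̃ + ŶᵀŶ + ẐᵀẐ + λI`. The relative errors
then add up to `3ε` on the shared block `YᵀY + λI` but only to `ε` on `XᵀX` and `ZᵀZ`, and the
surplus `2ε (XᵀX + ZᵀZ)` is positive semidefinite, so it can be dropped.
-/

section OverlappingSandwiches

variable {M : Type*} [AddCommGroup M] [PartialOrder M] [IsOrderedAddMonoid M] [Module ℝ M]
  [PosSMulMono ℝ M] {ε : ℝ} {A B C L A' B' B'' C'' : M}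

theorem smul_le_add_of_overlapping_sandwiches (hε : 0 ≤ ε) (hA : 0 ≤ A) (hC : 0 ≤ C)
    (hB : B' + L ≤ (1 + ε) • (B + L)) (hAB : (1 - ε) • (A + B + L) ≤ A' + B' + L)
    (hBC : (1 - ε) • (B + C + L) ≤ B'' + C'' + L) :
    (1 - 3 * ε) • (A + B + C + L) ≤ A' + B'' + C'' + L := by
  rw [← sub_nonneg] at hB hAB hBC ⊢
  have hAC : 0 ≤ (2 * ε) • (A + C) := smul_nonneg (by linarith) (add_nonneg hA hC)
  have h := add_nonneg (add_nonneg (add_nonneg hAB hBC) hB) hAC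
  convert h using 1
  module

theorem add_le_smul_of_overlapping_sandwiches (hε : 0 ≤ ε) (hA : 0 ≤ A) (hC : 0 ≤ C)
    (hB : (1 - ε) • (B + L) ≤ B' + L) (hAB : A' + B' + L ≤ (1 + ε) • (A + B + L))
    (hBC : B'' + C'' + L ≤ (1 + ε) • (B + C + L)) :
    A' + B'' + C'' + L ≤ (1 + 3 * ε) • (A + B + C + L) := by
  rw [← sub_nonneg] at hB hAB hBC ⊢
  have hAC : 0 ≤ (2 * ε) • (A + C) := smul_nonneg (by linarith) (add_nonneg hA hC)
  have h := add_nonneg (add_nonneg (add_nonneg hAB hBC) hB) hAC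
  convert h using 1
  module

end OverlappingSandwiches

open scoped MatrixOrder

theorem Matrix.transpose_mul_self_nonneg {m n : Type*} [Fintype m] [Fintype n]
    (X : Matrix m n ℝ) : 0 ≤ Xᵀ * X := by
  simpa using (posSemidef_conjTranspose_mul_self X).nonneg

theorem downsample_sandwich_general (n a b c a' b' b'' c'' : ℕ) (ε lam : ℝ)
    (hε : 0 ≤ ε)
    (X : Matrix (Fin a) (Fin n) ℝ) (Y : Matrix (Fin b) (Fin n) ℝ)
    (Z : Matrix (Fin c) (Fin n) ℝ)
    (Xt : Matrix (Fin a') (Fin n) ℝ) (Yt : Matrix (Fin b') (Fin n) ℝ)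
    (Yh : Matrix (Fin b'') (Fin n) ℝ) (Zh : Matrix (Fin c'') (Fin n) ℝ)
    (h1l : ((Ytᵀ * Yt + lam • 1) - (1 - ε) • (Yᵀ * Y + lam • 1)).PosSemidef)
    (h1r : ((1 + ε) • (Yᵀ * Y + lam • 1) - (Ytᵀ * Yt + lam • 1)).PosSemidef)
    (h2l : ((Xtᵀ * Xt + Ytᵀ * Yt + lam • 1)
        - (1 - ε) • (Xᵀ * X + Yᵀ * Y + lam • 1)).PosSemidef)
    (h2r : ((1 + ε) • (Xᵀ * X + Yᵀ * Y + lam • 1)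
        - (Xtᵀ * Xt + Ytᵀ * Yt + lam • 1)).PosSemidef)
    (h3l : ((Yhᵀ * Yh + Zhᵀ * Zh + lam • 1)
        - (1 - ε) • (Yᵀ * Y + Zᵀ * Z + lam • 1)).PosSemidef)
    (h3r : ((1 + ε) • (Yᵀ * Y + Zᵀ * Z + lam • 1)
        - (Yhᵀ * Yh + Zhᵀ * Zh + lam • 1)).PosSemidef) :
    ((Xtᵀ * Xt + Yhᵀ * Yh + Zhᵀ * Zh + lam • 1)
      - (1 - 3 * ε) • (Xᵀ * X + Yᵀ * Y + Zᵀ * Z + lam • 1)).PosSemidef ∧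
    ((1 + 3 * ε) • (Xᵀ * X + Yᵀ * Y + Zᵀ * Z + lam • 1)
      - (Xtᵀ * Xt + Yhᵀ * Yh + Zhᵀ * Zh + lam • 1)).PosSemidef :=
  -- under `MatrixOrder`, `P ≤ Q` unfolds to `(Q - P).PosSemidef`, so the hypotheses fit as stated
  ⟨smul_le_add_of_overlapping_sandwiches hε (transpose_mul_self_nonneg X)
      (transpose_mul_self_nonneg Z) h1r h2l h3l,
    add_le_smul_of_overlapping_sandwiches hε (transpose_mul_self_nonneg X)
      (transpose_mul_self_nonneg Z) h1l h2r h3r⟩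

/-- **Deterministic sandwich in the DownSample lemma.**
From the three Loewner sandwiches (1), (2), (3), one gets
`(1-3ε)(G+λI) ⪯ X̃ᵀX̃ + ŶᵀŶ + ẐᵀẐ + λI ⪯ (1+3ε)(G+λI)` with `G = XᵀX+YᵀY+ZᵀZ`. -/
theorem downsample_sandwich (n a b c a' b' b'' c'' : ℕ) (ε lam : ℝ)
    (hε : 0 ≤ ε) (hlam : 0 ≤ lam)
    (X : Matrix (Fin a) (Fin n) ℝ) (Y : Matrix (Fin b) (Fin n) ℝ)
    (Z : Matrix (Fin c) (Fin n) ℝ)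
    (Xt : Matrix (Fin a') (Fin n) ℝ) (Yt : Matrix (Fin b') (Fin n) ℝ)
    (Yh : Matrix (Fin b'') (Fin n) ℝ) (Zh : Matrix (Fin c'') (Fin n) ℝ)
    (h1l : ((Ytᵀ * Yt + lam • 1) - (1 - ε) • (Yᵀ * Y + lam • 1)).PosSemidef)
    (h1r : ((1 + ε) • (Yᵀ * Y + lam • 1) - (Ytᵀ * Yt + lam • 1)).PosSemidef)
    (h2l : ((Xtᵀ * Xt + Ytᵀ * Yt + lam • 1)
        - (1 - ε) • (Xᵀ * X + Yᵀ * Y + lam • 1)).PosSemidef)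
    (h2r : ((1 + ε) • (Xᵀ * X + Yᵀ * Y + lam • 1)
        - (Xtᵀ * Xt + Ytᵀ * Yt + lam • 1)).PosSemidef)
    (h3l : ((Yhᵀ * Yh + Zhᵀ * Zh + lam • 1)
        - (1 - ε) • (Yᵀ * Y + Zᵀ * Z + lam • 1)).PosSemidef)
    (h3r : ((1 + ε) • (Yᵀ * Y + Zᵀ * Z + lam • 1)
        - (Yhᵀ * Yh + Zhᵀ * Zh + lam • 1)).PosSemidef) :
    ((Xtᵀ * Xt + Yhᵀ * Yh + Zhᵀ * Zh + lam • 1)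
      - (1 - 3 * ε) • (Xᵀ * X + Yᵀ * Y + Zᵀ * Z + lam • 1)).PosSemidef ∧
    ((1 + 3 * ε) • (Xᵀ * X + Yᵀ * Y + Zᵀ * Z + lam • 1)
      - (Xtᵀ * Xt + Yhᵀ * Yh + Zhᵀ * Zh + lam • 1)).PosSemidef :=
  downsample_sandwich_general n a b c a' b' b'' c'' ε lam hε X Y Z Xt Yt Yh Zh h1l h1r h2l h2r h3l
    h3r
end

section
/- Let A ∈ ℝ^{m×n}, λ ≥ 0, and 1 ≤ k < n. Let σ_1 ≥ σ_2 ≥ … ≥ σ_n ≥ 0 be the eigenvalues of AᵀA in nonincreasing order. Then det(AᵀA + λI) ≤ (σ_1 + λ)^k · ((σ_{k+1}+⋯+σ_n)/(n−k) + λ)^{n−k}. Equivalently, det(AᵀA + λI) ≤ (‖A‖₂² + λ)^k · (‖A−A_k‖_F²/(n−k) + λ)^{n−k}, where ‖A−A_k‖_F² = σ_{k+1}+⋯+σ_n is the squared Frobenius error of the best rank-k approximation of A. -/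
/-!
The determinant of `AᵀA + λI` is `∏ (σᵢ + λ)`. The `k` largest factors are each at most
`σ₁ + λ`, and by AM–GM the product of the remaining `n - k` factors is at most the
`(n - k)`-th power of their mean, `(σ_{k+1} + ⋯ + σ_n)/(n - k) + λ`.
-/

open Matrix Finset

theorem Matrix.IsHermitian.det_add_smul_one_s4 {𝕜 n : Type*} [RCLike 𝕜] [Fintype n] [DecidableEq n]
    {A : Matrix n n 𝕜} (hA : A.IsHermitian) (c : 𝕜) :
    (A + c • 1).det = ∏ i, ((hA.eigenvalues i : 𝕜) + c) := by
  -- `det (A + c • 1) = (-1)ⁿ χ_A(-c)`, and `χ_A = ∏ (X - μᵢ)`.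
  have h := congrArg (Polynomial.eval (-c)) hA.charpoly_eq
  have hneg : scalar n (-c) - A = -(A + c • 1) := by
    rw [scalar_apply, ← smul_one_eq_diagonal, neg_smul, neg_add_rev, sub_eq_neg_add, add_comm]
  rw [eval_charpoly, Polynomial.eval_prod, hneg, det_neg] at h
  simp only [Polynomial.eval_sub, Polynomial.eval_X, Polynomial.eval_C, ← neg_add',
    prod_neg, card_univ] at h
  refine mul_left_cancel₀ (pow_ne_zero _ (neg_ne_zero.2 one_ne_zero)) (h.trans ?_)
  simp_rw [add_comm c]

theorem Real.prod_le_arith_mean_pow {ι : Type*} (s : Finset ι) {f : ι → ℝ}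
    (hf : ∀ i ∈ s, 0 ≤ f i) : ∏ i ∈ s, f i ≤ ((∑ i ∈ s, f i) / #s) ^ #s := by
  rcases s.eq_empty_or_nonempty with rfl | hs
  · simp
  have hcard : (0 : ℝ) < #s := by exact_mod_cast hs.card_pos
  have amgm := Real.geom_mean_le_arith_mean s (fun _ ↦ 1) f (fun _ _ ↦ zero_le_one)
    (by simpa using hcard) hf
  simp only [Real.rpow_one, one_mul, sum_const, nsmul_eq_mul, mul_one] at amgm
  rwa [Real.rpow_inv_le_iff_of_pos (prod_nonneg hf) (div_nonneg (sum_nonneg hf) hcard.le) hcard,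
    Real.rpow_natCast] at amgm

theorem Real.prod_le_pow_mul_arith_mean_pow {ι : Type*} [Fintype ι] [DecidableEq ι]
    {f : ι → ℝ} (hf : ∀ i, 0 ≤ f i) (t : Finset ι) {M : ℝ} (hM : ∀ i ∉ t, f i ≤ M) :
    ∏ i, f i ≤ M ^ #tᶜ * ((∑ i ∈ t, f i) / #t) ^ #t := by
  rw [← prod_compl_mul_prod t]
  have head : ∏ i ∈ tᶜ, f i ≤ M ^ #tᶜ :=
    (prod_le_prod (fun i _ ↦ hf i) fun i hi ↦ hM i (mem_compl.1 hi)).trans_eq (prod_const M)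
  have tail := Real.prod_le_arith_mean_pow t fun i _ ↦ hf i
  exact mul_le_mul_of_nonneg head tail (prod_nonneg fun i _ ↦ hf i)
    ((prod_nonneg fun i _ ↦ hf i).trans tail)

/-- **AM–GM determinant bound.**
If `σ 0 ≥ σ 1 ≥ … ≥ σ (n-1) ≥ 0` are the eigenvalues of `AᵀA` in nonincreasing order,
`λ ≥ 0`, and `1 ≤ k < n`, then
`det(AᵀA + λI) ≤ (σ₁ + λ)^k · ((σ_{k+1}+⋯+σ_n)/(n-k) + λ)^(n-k)`. -/
theorem det_amgm_bound (m n k : ℕ) (hkn : k < n)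
    (lam : ℝ) (hlam : 0 ≤ lam)
    (A : Matrix (Fin m) (Fin n) ℝ)
    (σ : Fin n → ℝ) (hmono : Antitone σ) (e : Fin n ≃ Fin n)
    (hσ : ∀ i, σ i = (Matrix.isHermitian_conjTranspose_mul_self A).eigenvalues (e i)) :
    (Aᵀ * A + lam • 1).det ≤
      (σ ⟨0, by omega⟩ + lam) ^ k *
        ((∑ i : Fin n, if k ≤ (i : ℕ) then σ i else 0) / ((n - k : ℕ) : ℝ) + lam)
          ^ (n - k) := by
  have hdet : (Aᵀ * A + lam • 1).det = ∏ i, (σ i + lam) := by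
    rw [← conjTranspose_eq_transpose_of_trivial,
      (isHermitian_conjTranspose_mul_self A).det_add_smul_one_s4, ← e.prod_comp]
    simp [hσ]
  have hnonneg i : 0 ≤ σ i + lam := by
    rw [hσ]; exact add_nonneg (eigenvalues_conjTranspose_mul_self_nonneg A _) hlam
  set tail : Finset (Fin n) := {i | k ≤ (i : ℕ)}
  have hcard : #tail = n - k := by
    rw [show tail = Ici ⟨k, hkn⟩ by ext; simp [tail, Fin.le_def], Fin.card_Ici]
  have hmean : (∑ i ∈ tail, (σ i + lam)) / #tail =
      (∑ i : Fin n, if k ≤ (i : ℕ) then σ i else 0) / ((n - k : ℕ) : ℝ) + lam := by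
    have hpos : (0 : ℝ) < ((n - k : ℕ) : ℝ) := by exact_mod_cast Nat.sub_pos_of_lt hkn
    rw [sum_add_distrib, sum_const, nsmul_eq_mul, hcard, sum_filter, add_div,
      mul_div_cancel_left₀ _ hpos.ne']
  have hhead : ∀ i ∉ tail, σ i + lam ≤ σ ⟨0, by omega⟩ + lam := fun i _ ↦
    add_le_add_left (hmono (Nat.zero_le i)) lam
  have hhead_card : #tailᶜ = k := by rw [card_compl, hcard, Fintype.card_fin]; omega
  have bound := Real.prod_le_pow_mul_arith_mean_pow hnonneg tail hhead
  rwa [hhead_card, hmean, hcard, ← hdet] at bound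
end

section
/- Let A ∈ ℝ^{m×n} have rows a_1,…,a_m, let 1 ≤ k < n and β ≥ 1, and let σ_1 ≥ … ≥ σ_n ≥ 0 be the eigenvalues of AᵀA in nonincreasing order. Assume rank(A) > k, so that λ := (σ_{k+1}+⋯+σ_n)/(βk) > 0 (here σ_{k+1}+⋯+σ_n = ‖A−A_k‖_F², the squared Frobenius error of the best rank-k approximation of A). Then the online λ-ridge leverage scores l_1,…,l_m of the rows of A satisfy Σ_{i=1}^m l_i ≤ 2βk + 2k·ln(1 + σ_1/λ) = 2βk + 2k·ln(1 + βk·‖A‖₂²/‖A−A_k‖_F²). -/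
open Matrix

lemma det_add_vecMulVec {n : ℕ} {M : Matrix (Fin n) (Fin n) ℝ} (hM : M.PosDef)
    (a : Fin n → ℝ) :
    det (M + vecMulVec a a) = det M * (1 + a ⬝ᵥ (M⁻¹ *ᵥ a)) := by
  have h1 : M + vecMulVec a a = M * (1 + M⁻¹ * vecMulVec a a) := by
    rw [mul_add, mul_one, ← mul_assoc, Matrix.mul_nonsing_inv _ hM.det_pos.ne'.isUnit, one_mul]
  rw [h1, det_mul, vecMulVec_eq Unit, ← Matrix.mul_assoc, ← replicateCol_mulVec, det_one_add_replicateCol_mul_replicateRow]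

lemma min_le_two_log {x : ℝ} (hx : 0 ≤ x) : min x 1 ≤ 2 * Real.log (1 + x) := by
  rcases le_or_gt x 1 with h | h
  · rw [min_eq_left h]
    have hexp : Real.exp (x / 2) ≤ 1 + x := by
      have h1 : 1 - x / 2 ≤ Real.exp (-(x / 2)) := by
        have := Real.add_one_le_exp (-(x / 2)); linarith
      have h2 : 0 < 1 - x / 2 ∨ x = 1 := by rcases lt_or_eq_of_le h with h' | h'; · left; linarith
                                            · right; exact h'
      rcases h2 with h2 | h2
      · have h3 : Real.exp (x / 2) * Real.exp (-(x/2)) = 1 := by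
          rw [← Real.exp_add]; simp
        have h4 : Real.exp (x/2) ≤ 1 / (1 - x/2) := by
          rw [le_div_iff₀ h2]
          nlinarith [Real.exp_pos (x/2)]
        have h5 : 1 / (1 - x/2) ≤ 1 + x := by
          rw [div_le_iff₀ h2]; nlinarith
        linarith
      · subst h2
        have : Real.exp ((1:ℝ)/2) ≤ 2 := by
          nlinarith [Real.exp_one_lt_d9, Real.exp_pos (1/2:ℝ),
            Real.exp_add ((1:ℝ)/2) ((1:ℝ)/2), sq_nonneg (Real.exp ((1:ℝ)/2) - 2)]
        norm_num; linarith
    calc x = 2 * (x/2) := by ring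
    _ ≤ 2 * Real.log (1 + x) := by
        have := Real.le_log_iff_exp_le (by linarith : (0:ℝ) < 1 + x) |>.mpr hexp
        linarith
  · rw [min_eq_right h.le]
    have h2 : Real.log 2 ≤ Real.log (1 + x) :=
      Real.log_le_log (by norm_num) (by linarith)
    nlinarith [Real.log_two_gt_d9]

lemma psd_vecMulVec {n : ℕ} (a : Fin n → ℝ) : (vecMulVec a a).PosSemidef := by
  have h : vecMulVec a a = (replicateRow Unit a)ᴴ * (replicateRow Unit a) := by
    rw [vecMulVec_eq Unit, conjTranspose_replicateRow, star_trivial]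
  rw [h]; exact posSemidef_conjTranspose_mul_self _

lemma posdef_smul_one {n : ℕ} {c : ℝ} (hc : 0 < c) :
    (c • (1 : Matrix (Fin n) (Fin n) ℝ)).PosDef := by
  rw [smul_one_eq_diagonal]
  exact posDef_diagonal_iff.mpr (fun _ => hc)

lemma psd_sum_ite {m n : ℕ} (A : Matrix (Fin m) (Fin n) ℝ) (t : ℕ) :
    (∑ j : Fin m, if (j : ℕ) < t then vecMulVec (A j) (A j) else 0).PosSemidef := by
  refine Finset.sum_induction _ (fun (M : Matrix (Fin n) (Fin n) ℝ) => M.PosSemidef)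
    (fun a b ha hb => ha.add hb) Matrix.PosSemidef.zero (fun j _ => ?_)
  split
  · exact psd_vecMulVec _
  · exact Matrix.PosSemidef.zero

lemma sum_vecMulVec_eq {m n : ℕ} (A : Matrix (Fin m) (Fin n) ℝ) :
    (∑ j : Fin m, vecMulVec (A j) (A j)) = Aᵀ * A := by
  ext i j
  simp [Matrix.sum_apply, vecMulVec_apply, mul_apply, mul_comm]

lemma det_AtA_add_smul {m n : ℕ} (A : Matrix (Fin m) (Fin n) ℝ) (c : ℝ) :
    det (Aᵀ * A + c • 1) =
      ∏ j, ((Matrix.isHermitian_conjTranspose_mul_self A).eigenvalues j + c) := by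
  set hH := Matrix.isHermitian_conjTranspose_mul_self A with hHdef
  set U : Matrix (Fin n) (Fin n) ℝ := (hH.eigenvectorUnitary : Matrix (Fin n) (Fin n) ℝ) with hUdef
  have hU : U * star U = 1 := (Matrix.mem_unitaryGroup_iff).mp hH.eigenvectorUnitary.2
  have hs' : Aᵀ * A = U * diagonal hH.eigenvalues * star U := by
    have hs := hH.spectral_theorem
    have hAt : Aᵀ * A = Aᴴ * A := by rw [conjTranspose_eq_transpose_of_trivial]
    have hdiag : diagonal (RCLike.ofReal ∘ hH.eigenvalues) = diagonal hH.eigenvalues := rfl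
    rw [hAt]; exact hs.trans (by rw [hdiag]; rfl)
  have h3 : U * (c • (1 : Matrix (Fin n) (Fin n) ℝ)) * star U = c • 1 := by
    rw [Matrix.mul_smul, Matrix.mul_one, Matrix.smul_mul, hU]
  have h2 : diagonal (fun j => hH.eigenvalues j + c)
      = diagonal hH.eigenvalues + c • (1 : Matrix (Fin n) (Fin n) ℝ) := by
    rw [smul_one_eq_diagonal, diagonal_add]
  have h1 : Aᵀ * A + c • 1 = U * (diagonal (fun j => hH.eigenvalues j + c)) * star U := by
    rw [h2, Matrix.mul_add, Matrix.add_mul, h3, hs']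
  rw [h1, det_mul_right_comm, hU, one_mul, det_diagonal]

/-- The online `λ`-ridge leverage score of the `i`-th row of `A`:
`min( aᵢ (∑_{j<i} aⱼᵀaⱼ + λI)⁻¹ aᵢᵀ , 1 )`. -/
noncomputable def onlineRidgeScore {m n : ℕ} (A : Matrix (Fin m) (Fin n) ℝ)
    (lam : ℝ) (i : Fin m) : ℝ :=
  min ((A i) ⬝ᵥ
    (((∑ j : Fin m, if (j : ℕ) < (i : ℕ) then vecMulVec (A j) (A j) else 0)
        + lam • 1)⁻¹ *ᵥ (A i))) 1

/-- **Sum of online ridge leverage scores with the low-rank regularization.**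
With `σ` the eigenvalues of `AᵀA` in nonincreasing order, `rank A > k`,
and `λ = (σ_{k+1}+⋯+σ_n)/(βk)`, the online `λ`-ridge leverage scores satisfy
`∑ lᵢ ≤ 2βk + 2k·ln(1 + σ₁/λ)`. -/
theorem sum_onlineRidgeScore_lowrank (m n k : ℕ) (hk1 : 1 ≤ k) (hkn : k < n)
    (β : ℝ) (hβ : 1 ≤ β)
    (A : Matrix (Fin m) (Fin n) ℝ)
    (σ : Fin n → ℝ) (hmono : Antitone σ) (e : Fin n ≃ Fin n)
    (hσ : ∀ i, σ i = (Matrix.isHermitian_conjTranspose_mul_self A).eigenvalues (e i))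
    (hrank : k < A.rank)
    (lam : ℝ)
    (hlam : lam = (∑ i : Fin n, if k ≤ (i : ℕ) then σ i else 0) / (β * k)) :
    ∑ i : Fin m, onlineRidgeScore A lam i ≤
      2 * β * k + 2 * k * Real.log (1 + σ ⟨0, by omega⟩ / lam) := by
  have hH := Matrix.isHermitian_conjTranspose_mul_self A
  set eig : Fin n → ℝ := (Matrix.isHermitian_conjTranspose_mul_self A).eigenvalues with heig
  have heignn : ∀ j, 0 ≤ eig j := fun j =>
    (posSemidef_conjTranspose_mul_self A).eigenvalues_nonneg j
  have hσnn : ∀ i, 0 ≤ σ i := fun i => (hσ i) ▸ heignn (e i)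
  have hkpos : (0:ℝ) < (k:ℝ) := by exact_mod_cast hk1
  have hkn' : k < n := by omega
  have hn0 : 0 < n := by omega
  -- σ_k > 0 from rank
  have hσk : 0 < σ ⟨k, hkn'⟩ := by
    rcases lt_or_eq_of_le (hσnn ⟨k, hkn'⟩) with h | h
    · exact h
    exfalso
    have hk0 : σ ⟨k, hkn'⟩ = 0 := h.symm
    have hcard : A.rank = Fintype.card {i // eig i ≠ 0} := by
      rw [← Matrix.rank_transpose_mul_self A,
        show Aᵀ * A = Aᴴ * A by rw [conjTranspose_eq_transpose_of_trivial]]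
      exact hH.rank_eq_card_non_zero_eigs
    have hinj : Function.Injective (fun (j : {i // eig i ≠ 0}) =>
        (⟨(e.symm j.1 : Fin n).val, by
          by_contra hge
          push_neg at hge
          have h1 : (⟨k, hkn'⟩ : Fin n) ≤ e.symm j.1 := by
            rw [Fin.le_def]; exact hge
          have h2 : σ (e.symm j.1) ≤ 0 := by
            have := hmono h1; rw [hk0] at this; exact this
          have h3 : σ (e.symm j.1) = eig j.1 := by rw [hσ]; simp
          exact j.2 (le_antisymm (h3 ▸ h2) (heignn j.1))⟩ : Fin k)) := by
      intro a b hab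
      simp only [Fin.mk.injEq] at hab
      exact Subtype.ext (e.symm.injective (Fin.ext hab))
    have := Fintype.card_le_of_injective _ hinj
    rw [Fintype.card_fin] at this
    omega
  -- tail sum positive
  set T : ℝ := ∑ i : Fin n, if k ≤ (i : ℕ) then σ i else 0 with hT
  have hTpos : 0 < T := by
    have h1 : σ ⟨k, hkn'⟩ ≤ T := by
      have := Finset.single_le_sum
        (f := fun i : Fin n => if k ≤ (i : ℕ) then σ i else 0)
        (fun i _ => by split; exacts [hσnn i, le_refl 0]) (Finset.mem_univ ⟨k, hkn'⟩)
      simpa using this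
    linarith
  have hlampos : 0 < lam := by
    rw [hlam]; exact div_pos hTpos (by positivity)
  -- matrix sequence
  set Mt : ℕ → Matrix (Fin n) (Fin n) ℝ := fun t =>
    (∑ j : Fin m, if (j : ℕ) < t then vecMulVec (A j) (A j) else 0) + lam • 1 with hMt
  have hMpd : ∀ t, (Mt t).PosDef := fun t =>
    Matrix.PosDef.posSemidef_add (psd_sum_ite A t) (posdef_smul_one hlampos)
  set tau : Fin m → ℝ := fun i => A i ⬝ᵥ ((Mt (i : ℕ))⁻¹ *ᵥ A i) with htau
  have hscore : ∀ i, onlineRidgeScore A lam i = min (tau i) 1 := fun i => rfl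
  have htaunn : ∀ i, 0 ≤ tau i := by
    intro i
    have hpd := (hMpd (i : ℕ)).inv
    rcases eq_or_ne (A i) 0 with h | h
    · simp [htau, h]
    · have := hpd.dotProduct_mulVec_pos h
      rw [star_trivial] at this
      exact le_of_lt this
  -- step
  have hstep : ∀ (i : Fin m), Mt ((i : ℕ) + 1) = Mt (i : ℕ) + vecMulVec (A i) (A i) := by
    intro i
    simp only [hMt]
    rw [add_right_comm]
    congr 1
    have hsplit : ∀ j : Fin m, (if (j : ℕ) < (i : ℕ) + 1 then vecMulVec (A j) (A j) else 0)
        = (if (j : ℕ) < (i : ℕ) then vecMulVec (A j) (A j) else 0)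
          + (if j = i then vecMulVec (A j) (A j) else 0) := by
      intro j
      by_cases h1 : j = i
      · subst h1; simp
      · have h2 : (j : ℕ) ≠ (i : ℕ) := fun hc => h1 (Fin.ext hc)
        by_cases h3 : (j : ℕ) < (i : ℕ)
        · rw [if_pos (by omega), if_pos h3, if_neg h1, add_zero]
        · rw [if_neg (by omega), if_neg h3, if_neg h1, add_zero]
    rw [Finset.sum_congr rfl (fun j _ => hsplit j), Finset.sum_add_distrib,
      Finset.sum_ite_eq' Finset.univ i (fun j => vecMulVec (A j) (A j)),
      if_pos (Finset.mem_univ i)]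
  -- telescoping determinant
  have hdet : ∀ t : ℕ, t ≤ m →
      det (Mt t) = det (Mt 0) * ∏ i : Fin m, (if (i : ℕ) < t then (1 + tau i) else 1) := by
    intro t
    induction t with
    | zero => intro _; simp
    | succ t ih =>
      intro ht
      have htm : t < m := ht
      have hi : ((⟨t, htm⟩ : Fin m) : ℕ) = t := rfl
      have hstep' := hstep ⟨t, htm⟩
      rw [hi] at hstep'
      rw [hstep', det_add_vecMulVec (hMpd t) (A ⟨t, htm⟩), ih (le_of_lt htm)]
      have htt : tau ⟨t, htm⟩ = A ⟨t, htm⟩ ⬝ᵥ ((Mt t)⁻¹ *ᵥ A ⟨t, htm⟩) := rfl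
      rw [← htt]
      have hps : ∀ i : Fin m, (if (i : ℕ) < t + 1 then (1 + tau i) else 1)
          = (if (i : ℕ) < t then (1 + tau i) else 1)
            * (if i = ⟨t, htm⟩ then (1 + tau i) else 1) := by
        intro i
        by_cases h1 : i = (⟨t, htm⟩ : Fin m)
        · subst h1; simp
        · have h2 : (i : ℕ) ≠ t := fun hc => h1 (Fin.ext hc)
          by_cases h3 : (i : ℕ) < t
          · rw [if_pos (by omega), if_pos h3, if_neg h1, mul_one]
          · rw [if_neg (by omega), if_neg h3, if_neg h1, mul_one]
      rw [Finset.prod_congr rfl (fun i _ => hps i), Finset.prod_mul_distrib,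
        Finset.prod_ite_eq' Finset.univ (⟨t, htm⟩ : Fin m) (fun i => 1 + tau i),
        if_pos (Finset.mem_univ _)]
      ring
  have hdetm := hdet m le_rfl
  have hfull : ∏ i : Fin m, (if (i : ℕ) < m then (1 + tau i) else 1) = ∏ i : Fin m, (1 + tau i) :=
    Finset.prod_congr rfl (fun i _ => by rw [if_pos i.isLt])
  rw [hfull] at hdetm
  -- endpoint values
  have hM0 : det (Mt 0) = lam ^ n := by
    have : Mt 0 = lam • (1 : Matrix (Fin n) (Fin n) ℝ) := by
      simp [hMt]
    rw [this, det_smul, det_one, mul_one, Fintype.card_fin]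
  have hMm : det (Mt m) = ∏ j, (eig j + lam) := by
    have h1 : Mt m = Aᵀ * A + lam • 1 := by
      simp only [hMt]
      congr 1
      rw [← sum_vecMulVec_eq A]
      exact Finset.sum_congr rfl (fun j _ => by rw [if_pos j.isLt])
    rw [h1, det_AtA_add_smul]
  rw [hM0, hMm] at hdetm
  -- product of (1+tau) in terms of eigenvalues
  have hptau : ∀ i : Fin m, (0:ℝ) < 1 + tau i := fun i => by linarith [htaunn i]
  have hlogprod : ∑ i : Fin m, Real.log (1 + tau i) = ∑ j, Real.log (1 + eig j / lam) := by
    have h1 : (∏ i : Fin m, (1 + tau i)) = ∏ j, ((eig j + lam) / lam) := by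
      rw [Finset.prod_div_distrib, Finset.prod_const, Finset.card_univ, Fintype.card_fin, hdetm]
      rw [mul_comm, mul_div_assoc, div_self (pow_ne_zero _ hlampos.ne'), mul_one]
    have h2 : ∑ i : Fin m, Real.log (1 + tau i) = Real.log (∏ i : Fin m, (1 + tau i)) :=
      (Real.log_prod (fun i _ => (hptau i).ne')).symm
    rw [h2, h1, Real.log_prod
      (fun j _ => (div_pos (by linarith [heignn j]) hlampos).ne')]
    refine Finset.sum_congr rfl (fun j _ => ?_)
    rw [add_div, div_self hlampos.ne', add_comm]
  -- switch to σ via permutation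
  have hperm : ∑ j, Real.log (1 + eig j / lam) = ∑ i, Real.log (1 + σ i / lam) := by
    rw [← Equiv.sum_comp e (fun j => Real.log (1 + eig j / lam))]
    exact Finset.sum_congr rfl (fun i _ => by rw [hσ i])
  -- bound the eigenvalue sum
  set c : ℝ := Real.log (1 + σ ⟨0, hn0⟩ / lam) with hc
  have hbound : ∑ i : Fin n, Real.log (1 + σ i / lam) ≤ k * c + β * k := by
    have hpw : ∀ i : Fin n, Real.log (1 + σ i / lam)
        ≤ (if (i : ℕ) < k then c else 0) + (if k ≤ (i : ℕ) then σ i / lam else 0) := by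
      intro i
      have hpos : (0:ℝ) < 1 + σ i / lam := by
        have := div_nonneg (hσnn i) hlampos.le; linarith
      by_cases h1 : (i : ℕ) < k
      · rw [if_pos h1, if_neg (by omega), add_zero, hc]
        have h0i : (⟨0, hn0⟩ : Fin n) ≤ i := by rw [Fin.le_def]; exact Nat.zero_le _
        have hle : σ i ≤ σ ⟨0, hn0⟩ := hmono h0i
        have hdd : σ i / lam ≤ σ ⟨0, hn0⟩ / lam := by gcongr
        exact Real.log_le_log hpos (by linarith)
      · rw [if_neg h1, if_pos (by omega), zero_add]
        have := Real.log_le_sub_one_of_pos hpos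
        linarith
    calc ∑ i : Fin n, Real.log (1 + σ i / lam)
        ≤ ∑ i : Fin n, ((if (i : ℕ) < k then c else 0) + (if k ≤ (i : ℕ) then σ i / lam else 0)) :=
          Finset.sum_le_sum (fun i _ => hpw i)
      _ = (∑ i : Fin n, if (i : ℕ) < k then c else 0)
          + (∑ i : Fin n, if k ≤ (i : ℕ) then σ i / lam else 0) := Finset.sum_add_distrib
      _ = k * c + β * k := by
          congr 1
          · rw [Fin.sum_univ_eq_sum_range (fun i => if i < k then c else 0) n,
              Finset.sum_ite, Finset.sum_const, Finset.sum_const_zero, add_zero]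
            have : Finset.filter (fun i => i < k) (Finset.range n) = Finset.range k := by
              ext i; simp; omega
            rw [this, Finset.card_range]
            simp [nsmul_eq_mul]
          · have h1 : ∀ i : Fin n, (if k ≤ (i : ℕ) then σ i / lam else 0)
                = (if k ≤ (i : ℕ) then σ i else 0) / lam := by
              intro i; split <;> simp
            rw [Finset.sum_congr rfl (fun i _ => h1 i), ← Finset.sum_div, ← hT, hlam]
            rw [div_div_eq_mul_div, mul_comm, mul_div_assoc, div_self hTpos.ne', mul_one]
  -- assemble
  calc ∑ i : Fin m, onlineRidgeScore A lam i
      = ∑ i : Fin m, min (tau i) 1 := Finset.sum_congr rfl (fun i _ => hscore i)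
    _ ≤ ∑ i : Fin m, 2 * Real.log (1 + tau i) :=
        Finset.sum_le_sum (fun i _ => min_le_two_log (htaunn i))
    _ = 2 * ∑ i : Fin m, Real.log (1 + tau i) := by rw [Finset.mul_sum]
    _ = 2 * ∑ i : Fin n, Real.log (1 + σ i / lam) := by rw [hlogprod, hperm]
    _ ≤ 2 * (k * c + β * k) := by linarith [hbound]
    _ = 2 * β * k + 2 * k * c := by ring
end

section
/- Let A ∈ ℝ^{m×n} have rows a_1,…,a_m and let λ > 0. Let l_1,…,l_m be the online λ-ridge leverage scores of the rows of A. Then det(AᵀA + λI) ≥ λⁿ · exp( (Σ_{i=1}^m l_i)/2 ). -/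
open Matrix

/-- Splitting an if-indexed sum at the top index. -/
lemma sum_if_lt_succ {M : Type*} [AddCommMonoid M] {m : ℕ} (k : ℕ) (hk : k < m)
    (f : Fin m → M) :
    (∑ j : Fin m, if (j : ℕ) < k + 1 then f j else 0)
      = (∑ j : Fin m, if (j : ℕ) < k then f j else 0) + f ⟨k, hk⟩ := by
  have key : ∀ j : Fin m, (if (j : ℕ) < k + 1 then f j else 0)
      = (if (j : ℕ) < k then f j else 0) + (if j = ⟨k, hk⟩ then f j else 0) := by
    intro j
    rcases lt_trichotomy (j : ℕ) k with h | h | h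
    · rw [if_pos (by omega), if_pos h, if_neg (fun e => by
        apply absurd (congrArg Fin.val e); simpa using h.ne), add_zero]
    · have hj : j = ⟨k, hk⟩ := Fin.ext h
      rw [if_pos (by omega), if_neg (by omega), if_pos hj, zero_add]
    · rw [if_neg (by omega), if_neg (by omega), if_neg (fun e => by
        apply absurd (congrArg Fin.val e); simpa using h.ne'), add_zero]
  rw [Finset.sum_congr rfl (fun j _ => key j), Finset.sum_add_distrib,
    Finset.sum_ite_eq' Finset.univ (⟨k, hk⟩ : Fin m) f, if_pos (Finset.mem_univ _)]

lemma posSemidef_vecMulVec_self {n : ℕ} (a : Fin n → ℝ) :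
    PosSemidef (vecMulVec a a) := by
  have h : vecMulVec a a = (replicateRow Unit a)ᴴ * replicateRow Unit a := by
    rw [conjTranspose_replicateRow, star_trivial, vecMulVec_eq Unit a a]
  rw [h]; exact posSemidef_conjTranspose_mul_self _

lemma exp_min_half_le {x : ℝ} (hx : 0 ≤ x) : Real.exp (min x 1 / 2) ≤ 1 + x := by
  rcases le_total x 1 with h | h
  · rw [min_eq_left h]
    have h1 : Real.exp (x / 2) ≤ 1 / (1 - x / 2) := by
      have h2 : 1 - x / 2 ≤ Real.exp (-(x / 2)) := by
        have := Real.add_one_le_exp (-(x / 2)); linarith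
      have h3 : (0:ℝ) < 1 - x / 2 := by linarith
      rw [le_div_iff₀ h3]
      calc Real.exp (x/2) * (1 - x/2) ≤ Real.exp (x/2) * Real.exp (-(x/2)) := by
            exact mul_le_mul_of_nonneg_left h2 (Real.exp_pos _).le
        _ = 1 := by rw [← Real.exp_add]; simp
    refine h1.trans ?_
    rw [div_le_iff₀ (by linarith)]
    nlinarith
  · rw [min_eq_right h]
    have h2 : Real.exp ((1:ℝ) / 2) < 2 := by
      have hsq : Real.exp ((1:ℝ) / 2) * Real.exp ((1:ℝ) / 2) = Real.exp 1 := by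
        rw [← Real.exp_add]; norm_num
      nlinarith [Real.exp_one_lt_d9, Real.exp_pos ((1:ℝ)/2)]
    linarith

/-- **Determinant lower bound from online ridge leverage scores.**
`det(AᵀA + λI) ≥ λⁿ · exp((∑ lᵢ)/2)`. -/
theorem det_ge_exp_sum_onlineRidgeScore (m n : ℕ) (lam : ℝ) (hlam : 0 < lam)
    (A : Matrix (Fin m) (Fin n) ℝ) :
    lam ^ n * Real.exp ((∑ i : Fin m, onlineRidgeScore A lam i) / 2) ≤
      (Aᵀ * A + lam • 1).det := by
  set S : ℕ → Matrix (Fin n) (Fin n) ℝ :=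
    fun k => ∑ j : Fin m, if (j : ℕ) < k then vecMulVec (A j) (A j) else 0 with hS
  set B : ℕ → Matrix (Fin n) (Fin n) ℝ := fun k => S k + lam • 1 with hB
  -- positivity facts
  have hSpsd : ∀ k, (S k).PosSemidef := by
    intro k
    induction k with
    | zero => simpa [hS] using (PosSemidef.zero (n := Fin n) (R := ℝ))
    | succ k ih =>
      by_cases hk : k < m
      · simp only [hS]
        rw [sum_if_lt_succ k hk]
        exact ih.add (posSemidef_vecMulVec_self _)
      · have : S (k + 1) = S k := by
          refine Finset.sum_congr rfl fun j _ => ?_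
          have := j.isLt
          rw [if_pos (by omega), if_pos (by omega)]
        rw [this]; exact ih
  have hone : (lam • (1 : Matrix (Fin n) (Fin n) ℝ)).PosDef := by
    rw [smul_one_eq_diagonal]
    exact PosDef.diagonal (fun _ => hlam)
  have hBpd : ∀ k, (B k).PosDef := fun k => Matrix.PosDef.posSemidef_add (hSpsd k) hone
  -- the main induction
  have main : ∀ k, k ≤ m →
      lam ^ n * Real.exp
        ((∑ i : Fin m, if (i : ℕ) < k then onlineRidgeScore A lam i else 0) / 2)
        ≤ (B k).det := by
    intro k
    induction k with
    | zero =>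
      intro _
      have hB0 : B 0 = lam • 1 := by
        simp [hB, hS]
      rw [hB0, det_smul, det_one, mul_one, Fintype.card_fin]
      simp
    | succ k ih =>
      intro hk1
      have hk : k < m := hk1
      have ihk := ih (le_of_lt hk)
      set a : Fin n → ℝ := A ⟨k, hk⟩ with ha
      set x : ℝ := a ⬝ᵥ (B k)⁻¹ *ᵥ a with hx
      have hxnonneg : 0 ≤ x := by
        have := ((hBpd k).posSemidef.inv).dotProduct_mulVec_nonneg a
        simpa [hx] using this
      have hscore : onlineRidgeScore A lam ⟨k, hk⟩ = min x 1 := rfl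
      -- determinant lemma step
      have hdet : (B (k + 1)).det = (B k).det * (1 + x) := by
        have hB1 : B (k + 1) = B k + vecMulVec a a := by
          simp only [hB, hS]
          rw [sum_if_lt_succ k hk, add_right_comm]
        rw [hB1, vecMulVec_eq Unit a a,
          det_add_replicateCol_mul_replicateRow (hBpd k).det_pos.ne'.isUnit a a]
        congr 1
        rw [Matrix.mul_assoc, det_unique]
        simp [hx, mulVec, dotProduct, Matrix.mul_apply, replicateCol, replicateRow]
      -- sum step
      have hsum : (∑ i : Fin m, if (i : ℕ) < k + 1 then onlineRidgeScore A lam i else 0)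
          = (∑ i : Fin m, if (i : ℕ) < k then onlineRidgeScore A lam i else 0)
            + min x 1 := by
        rw [sum_if_lt_succ k hk, hscore]
      rw [hdet, hsum]
      have hexp : Real.exp (((∑ i : Fin m, if (i : ℕ) < k then onlineRidgeScore A lam i
            else 0) + min x 1) / 2)
          = Real.exp ((∑ i : Fin m, if (i : ℕ) < k then onlineRidgeScore A lam i else 0) / 2)
            * Real.exp (min x 1 / 2) := by
        rw [← Real.exp_add]; ring_nf
      rw [hexp, ← mul_assoc]
      have h1 : Real.exp (min x 1 / 2) ≤ 1 + x := exp_min_half_le hxnonneg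
      have hpos : 0 ≤ lam ^ n * Real.exp
          ((∑ i : Fin m, if (i : ℕ) < k then onlineRidgeScore A lam i else 0) / 2) :=
        mul_nonneg (pow_nonneg hlam.le _) (Real.exp_pos _).le
      exact mul_le_mul ihk h1 (Real.exp_pos _).le (hBpd k).det_pos.le
  -- conclude at k = m
  have hfinal := main m le_rfl
  have hsum : (∑ i : Fin m, if (i : ℕ) < m then onlineRidgeScore A lam i else 0)
      = ∑ i : Fin m, onlineRidgeScore A lam i :=
    Finset.sum_congr rfl fun i _ => if_pos i.isLt
  have hSm : S m = Aᵀ * A := by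
    ext p q
    simp only [hS, Matrix.sum_apply]
    rw [Matrix.mul_apply]
    refine Finset.sum_congr rfl fun j _ => ?_
    rw [if_pos j.isLt, vecMulVec_apply, transpose_apply, mul_comm]
  have hBm : B m = Aᵀ * A + lam • 1 := by show S m + lam • 1 = _; rw [hSm]
  rw [hsum, hBm] at hfinal
  exact hfinal
end

section
/- For every α ∈ (0,1) there exist a dimension n, a positive integer d ≥ 2, matrices A ∈ ℝ^{(d+3)×n} and B ∈ ℝ^{(d+1)×n} such that B consists of the last d+1 rows of A, and a row vector c ∈ ℝ^{1×n}, with the following properties, where f(M) := inf{ ‖M−X‖_F : X a real matrix of the same dimensions as M with rank(X) ≤ 2 } denotes the best rank-2 Frobenius approximation error and M∘c denotes appending the row c to M: f(A) ≥ f(B) ≥ (1−α)·f(A) > 0, and yet f(B∘c) ≤ (1/2)·f(A∘c). Hence the best rank-2 approximation error is not an (α′,β)-smooth function for any α′ ≤ 1/2 and 0 < β ≤ α′: a suffix can be a (1−α)-approximation of the whole stream while failing to remain even a 1/2-approximation after new rows arrive. -/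
open Matrix

noncomputable def frobNorm {α β : Type*} [Fintype α] [Fintype β]
    (M : Matrix α β ℝ) : ℝ :=
  Real.sqrt (∑ i, ∑ j, (M i j) ^ 2)

noncomputable def rank2Err {α β : Type*} [Fintype α] [Fintype β]
    (M : Matrix α β ℝ) : ℝ :=
  sInf {e : ℝ | ∃ X : Matrix α β ℝ, X.rank ≤ 2 ∧ e = frobNorm (M - X)}

/-!
Let `M` have rows `s i • e (σ i)` for distinct standard basis vectors `e (σ i)`, and let `X`
have rank at most 2, with row space `W`. Projecting onto `W`, row `i` of `M - X` has squared
norm at least `s i ^ 2 * (1 - ‖P_W e (σ i)‖ ^ 2)`, and the weights `‖P_W e j‖ ^ 2` lie in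
`[0, 1]` and sum to `dim W ≤ 2`. So the squared error is at least the sum of the `s i ^ 2` minus
the two largest ones, which zeroing the two largest rows attains. Both big rows of `A` are
absorbed this way, but `B` retains only one of them; after appending the big row `c`, the
matrix `A∘c` has three big rows and pays about `4 d ^ 2` for one of them, while `B∘c` pays
only `d`.
-/

open RealInnerProductSpace

theorem OrthonormalBasis.sum_sq_norm_starProjection {κ E : Type*} [Fintype κ]
    [NormedAddCommGroup E] [InnerProductSpace ℝ E] (e : OrthonormalBasis κ ℝ E)
    (W : Submodule ℝ E) [FiniteDimensional ℝ W] :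
    ∑ j, ‖W.starProjection (e j)‖ ^ 2 = Module.finrank ℝ W := by
  set b := stdOrthonormalBasis ℝ W
  calc ∑ j, ‖W.starProjection (e j)‖ ^ 2
      = ∑ j, ∑ k, ⟪(b k : E), e j⟫ ^ 2 := by
        refine Finset.sum_congr rfl fun j _ => ?_
        rw [Submodule.starProjection_apply, Submodule.norm_coe, ← b.sum_sq_inner_right]
        simp
    _ = ∑ k, ∑ j, ⟪e j, (b k : E)⟫ ^ 2 := by
        rw [Finset.sum_comm]; simp_rw [real_inner_comm]
    _ = ∑ k, ‖(b k : E)‖ ^ 2 := Finset.sum_congr rfl fun k _ => e.sum_sq_inner_right _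
    _ = Module.finrank ℝ W := by
        simp_rw [Submodule.norm_coe, b.orthonormal.1]
        simp

theorem Submodule.sq_norm_sub_sq_norm_starProjection_le {E : Type*}
    [NormedAddCommGroup E] [InnerProductSpace ℝ E] (W : Submodule ℝ E)
    [W.HasOrthogonalProjection] (v : E) {x : E} (hx : x ∈ W) :
    ‖v‖ ^ 2 - ‖W.starProjection v‖ ^ 2 ≤ ‖v - x‖ ^ 2 := by
  have hmin : ‖v - W.starProjection v‖ ≤ ‖v - x‖ := by
    rw [Submodule.starProjection_minimal]
    exact ciInf_le ⟨0, Set.forall_mem_range.2 fun _ => norm_nonneg _⟩ (⟨x, hx⟩ : W)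
  have := W.norm_sq_eq_add_norm_sq_starProjection v
  rw [Submodule.starProjection_orthogonal_val] at this
  nlinarith [norm_nonneg (v - W.starProjection v)]

section RowSpace

variable {ι κ : Type*} [Fintype ι] [Fintype κ]

theorem sq_frobNorm (M : Matrix ι κ ℝ) : frobNorm M ^ 2 = ∑ i, ‖WithLp.toLp 2 (M i)‖ ^ 2 := by
  rw [frobNorm, Real.sq_sqrt (by positivity)]
  simp [EuclideanSpace.norm_sq_eq]

theorem finrank_span_toLp_row_eq_rank (X : Matrix ι κ ℝ) :
    Module.finrank ℝ (Submodule.span ℝ (Set.range fun i => WithLp.toLp 2 (X i))) = X.rank := by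
  rw [X.rank_eq_finrank_span_row, ← (WithLp.linearEquiv 2 ℝ (κ → ℝ)).symm.finrank_map_eq,
    Submodule.map_span, ← Set.range_comp]
  rfl

end RowSpace

section Rank2Err

variable {ι κ : Type*} [Fintype ι] [Fintype κ]

theorem rank2Err_le_frobNorm_sub (M : Matrix ι κ ℝ) {X : Matrix ι κ ℝ} (hX : X.rank ≤ 2) :
    rank2Err M ≤ frobNorm (M - X) :=
  csInf_le ⟨0, by rintro _ ⟨Y, -, rfl⟩; exact Real.sqrt_nonneg _⟩ ⟨X, hX, rfl⟩

theorem le_rank2Err {M : Matrix ι κ ℝ} {L : ℝ}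
    (h : ∀ X : Matrix ι κ ℝ, X.rank ≤ 2 → L ≤ frobNorm (M - X)) : L ≤ rank2Err M :=
  le_csInf ⟨_, 0, by simp, rfl⟩ (by rintro _ ⟨X, hX, rfl⟩; exact h X hX)

open Finset in
theorem rank2Err_le_sqrt_sum_compl [DecidableEq ι] (M : Matrix ι κ ℝ) {K : Finset ι}
    (hK : K.card ≤ 2) : rank2Err M ≤ √(∑ i ∈ Kᶜ, ∑ j, M i j ^ 2) := by
  have hX : (diagonal (fun i => if i ∈ K then (1 : ℝ) else 0) * M).rank ≤ 2 := by
    refine (rank_mul_le_left _ _).trans ?_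
    classical
    rw [rank_diagonal]
    simpa [Fintype.card_subtype] using hK
  refine (rank2Err_le_frobNorm_sub M hX).trans_eq ?_
  have hentry : ∀ i j, (M - diagonal (fun i => if i ∈ K then (1 : ℝ) else 0) * M) i j ^ 2
      = if i ∈ K then 0 else M i j ^ 2 := by
    intro i j
    by_cases hi : i ∈ K <;> simp [diagonal_mul, hi]
  simp only [frobNorm, hentry, ← sum_compl_add_sum K]
  congr 1
  rw [add_eq_left.mpr (sum_eq_zero fun i hi => by simp [hi])]
  exact sum_congr rfl fun i hi => by simp [mem_compl.mp hi]

end Rank2Err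

open Finset in
theorem le_sum_sq_mul_one_sub {ι : Type*} [Fintype ι] {s c : ι → ℝ} {K : Finset ι} {v : ℝ}
    (hv : 1 ≤ v) (hs : ∀ i, 1 ≤ s i ^ 2) (hK : ∀ i ∈ K, v ^ 2 ≤ s i ^ 2)
    (hc0 : ∀ i, 0 ≤ c i) (hc1 : ∀ i, c i ≤ 1) (hc : ∑ i, c i ≤ 2) :
    Fintype.card ι - 2 + (K.card - 2) * (v ^ 2 - 1) ≤ ∑ i, s i ^ 2 * (1 - c i) := by
  have hcK : ∑ i ∈ K, c i ≤ 2 := (sum_le_univ_sum_of_nonneg hc0).trans hc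
  have hexcess : ∑ i ∈ K, (v ^ 2 - 1) * (1 - c i) ≤ ∑ i, (s i ^ 2 - 1) * (1 - c i) :=
    calc ∑ i ∈ K, (v ^ 2 - 1) * (1 - c i)
        ≤ ∑ i ∈ K, (s i ^ 2 - 1) * (1 - c i) :=
          sum_le_sum fun i hi => mul_le_mul_of_nonneg_right (by linarith [hK i hi])
            (sub_nonneg.2 (hc1 i))
      _ ≤ ∑ i, (s i ^ 2 - 1) * (1 - c i) :=
          sum_le_univ_sum_of_nonneg fun i =>
            mul_nonneg (sub_nonneg.2 (hs i)) (sub_nonneg.2 (hc1 i))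
  have hsplit : ∑ i, s i ^ 2 * (1 - c i) = ∑ i, (1 - c i) + ∑ i, (s i ^ 2 - 1) * (1 - c i) := by
    rw [← sum_add_distrib]; exact sum_congr rfl fun i _ => by ring
  rw [← mul_sum, sum_sub_distrib, sum_const, nsmul_one] at hexcess
  rw [hsplit, sum_sub_distrib, sum_const, card_univ, nsmul_one]
  have hv2 : 0 ≤ v ^ 2 - 1 := by nlinarith
  nlinarith [mul_le_mul_of_nonneg_left hcK hv2]

def monomialRows {ι κ : Type*} [DecidableEq κ] (s : ι → ℝ) (σ : ι → κ) : Matrix ι κ ℝ :=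
  Matrix.of fun i => Pi.single (σ i) (s i)

theorem toLp_monomialRows {ι κ : Type*} [Fintype κ] [DecidableEq κ] (s : ι → ℝ)
    (σ : ι → κ) (i : ι) :
    WithLp.toLp 2 (monomialRows s σ i) = s i • EuclideanSpace.basisFun κ ℝ (σ i) := by
  ext k
  simp [monomialRows, Pi.single_apply]

theorem submatrix_monomialRows {ι ι' κ : Type*} [DecidableEq κ] (s : ι → ℝ) (σ : ι → κ)
    (f : ι' → ι) : (monomialRows s σ).submatrix f id = monomialRows (s ∘ f) (σ ∘ f) :=
  rfl

theorem fromRows_monomialRows {ι ι' κ : Type*} [DecidableEq κ] (s : ι → ℝ) (s' : ι' → ℝ)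
    (σ : ι → κ) (σ' : ι' → κ) :
    fromRows (monomialRows s σ) (monomialRows s' σ') =
      monomialRows (Sum.elim s s') (Sum.elim σ σ') := by
  ext (i | i) j <;> rfl

section MonomialRows

variable {ι κ : Type*} [Fintype ι] [Fintype κ] [DecidableEq κ]

theorem exists_sum_sq_mul_one_sub_le_sq_frobNorm {s : ι → ℝ} {σ : ι → κ}
    (hσ : Function.Injective σ) (X : Matrix ι κ ℝ) :
    ∃ c : ι → ℝ, (∀ i, 0 ≤ c i) ∧ (∀ i, c i ≤ 1) ∧ ∑ i, c i ≤ X.rank ∧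
      ∑ i, s i ^ 2 * (1 - c i) ≤ frobNorm (monomialRows s σ - X) ^ 2 := by
  set W := Submodule.span ℝ (Set.range fun i => WithLp.toLp 2 (X i))
  set e := EuclideanSpace.basisFun κ ℝ
  refine ⟨fun i => ‖W.starProjection (e (σ i))‖ ^ 2, fun i => by positivity, fun i => ?_, ?_, ?_⟩
  · simpa [e.orthonormal.1] using
      pow_le_pow_left₀ (norm_nonneg _) (W.norm_starProjection_apply_le (e (σ i))) 2
  · calc ∑ i, ‖W.starProjection (e (σ i))‖ ^ 2
        = ∑ j ∈ Finset.univ.map ⟨σ, hσ⟩, ‖W.starProjection (e j)‖ ^ 2 := by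
          rw [Finset.sum_map]; rfl
      _ ≤ ∑ j, ‖W.starProjection (e j)‖ ^ 2 :=
          Finset.sum_le_univ_sum_of_nonneg fun _ => by positivity
      _ = X.rank := by rw [e.sum_sq_norm_starProjection, finrank_span_toLp_row_eq_rank]
  · rw [sq_frobNorm]
    refine Finset.sum_le_sum fun i _ => ?_
    calc s i ^ 2 * (1 - ‖W.starProjection (e (σ i))‖ ^ 2)
        = ‖s i • e (σ i)‖ ^ 2 - ‖W.starProjection (s i • e (σ i))‖ ^ 2 := by
          rw [map_smul, norm_smul, norm_smul, e.orthonormal.1, Real.norm_eq_abs, mul_pow,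
            mul_pow, sq_abs]
          ring
      _ ≤ ‖s i • e (σ i) - WithLp.toLp 2 (X i)‖ ^ 2 :=
          W.sq_norm_sub_sq_norm_starProjection_le _ (Submodule.subset_span ⟨i, rfl⟩)
      _ = ‖WithLp.toLp 2 ((monomialRows s σ - X) i)‖ ^ 2 := by
          rw [← toLp_monomialRows]; rfl

theorem sqrt_le_rank2Err_monomialRows {s : ι → ℝ} {σ : ι → κ} (hσ : Function.Injective σ)
    {K : Finset ι} {v : ℝ} (hv : 1 ≤ v) (hs : ∀ i, 1 ≤ s i ^ 2)
    (hK : ∀ i ∈ K, v ^ 2 ≤ s i ^ 2) :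
    √(Fintype.card ι - 2 + (K.card - 2) * (v ^ 2 - 1)) ≤ rank2Err (monomialRows s σ) := by
  refine le_rank2Err fun X hX => ?_
  obtain ⟨c, hc0, hc1, hcX, hfrob⟩ := exists_sum_sq_mul_one_sub_le_sq_frobNorm (s := s) hσ X
  have hc : ∑ i, c i ≤ 2 := hcX.trans (by exact_mod_cast hX)
  calc √(Fintype.card ι - 2 + (K.card - 2) * (v ^ 2 - 1))
      ≤ √(frobNorm (monomialRows s σ - X) ^ 2) :=
        Real.sqrt_le_sqrt ((le_sum_sq_mul_one_sub hv hs hK hc0 hc1 hc).trans hfrob)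
    _ = frobNorm (monomialRows s σ - X) := Real.sqrt_sq (Real.sqrt_nonneg _)

theorem rank2Err_monomialRows_le_sqrt [DecidableEq ι] (s : ι → ℝ) (σ : ι → κ) {K : Finset ι}
    (hK : K.card ≤ 2) (hs : ∀ i ∉ K, s i ^ 2 ≤ 1) :
    rank2Err (monomialRows s σ) ≤ √(Fintype.card ι - K.card) := by
  refine (rank2Err_le_sqrt_sum_compl _ hK).trans (Real.sqrt_le_sqrt ?_)
  calc ∑ i ∈ Kᶜ, ∑ j, monomialRows s σ i j ^ 2 = ∑ i ∈ Kᶜ, s i ^ 2 := by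
        refine Finset.sum_congr rfl fun i _ => ?_
        simp [monomialRows, Pi.single_apply, ite_pow]
    _ ≤ ∑ i ∈ Kᶜ, 1 := Finset.sum_le_sum fun i hi => hs i (Finset.mem_compl.mp hi)
    _ = Fintype.card ι - K.card := by
        rw [Finset.sum_const, nsmul_one, Finset.card_compl, Nat.cast_sub K.card_le_univ]

end MonomialRows

-- The witness, 0-indexed: `A` has rows `2d•e₀, e₁, 2d•e₂, e₃, …, e_{d+2}` in `ℝ^{d+4}`,
-- `B` its last `d + 1` rows and `c = 2d•e_{d+3}`.
def bigRows (d : ℕ) : Finset (Fin (d + 3)) := {⟨0, by omega⟩, ⟨2, by omega⟩}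

def hardWeight (d : ℕ) (i : Fin (d + 3)) : ℝ := if i ∈ bigRows d then 2 * d else 1

def hardA (d : ℕ) : Matrix (Fin (d + 3)) (Fin (d + 4)) ℝ :=
  monomialRows (hardWeight d) Fin.castSucc

def hardB (d : ℕ) : Matrix (Fin (d + 1)) (Fin (d + 4)) ℝ :=
  (hardA d).submatrix (Fin.addNat · 2) id

def hardRow (d : ℕ) : Matrix (Fin 1) (Fin (d + 4)) ℝ :=
  monomialRows (fun _ => 2 * d) (fun _ => Fin.last (d + 3))

section HardInstance

variable {d : ℕ}

theorem card_bigRows : (bigRows d).card = 2 := Finset.card_pair (Fin.ne_of_val_ne (by norm_num))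

theorem addNat_mem_bigRows_iff {i : Fin (d + 1)} : i.addNat 2 ∈ bigRows d ↔ (i : ℕ) = 0 := by
  simp only [bigRows, Finset.mem_insert, Finset.mem_singleton, Fin.ext_iff, Fin.val_addNat]
  omega

theorem sq_hardWeight_of_mem {i : Fin (d + 3)} (hi : i ∈ bigRows d) :
    hardWeight d i ^ 2 = (2 * d) ^ 2 := by
  rw [hardWeight, if_pos hi]

theorem hardWeight_of_notMem {i : Fin (d + 3)} (hi : i ∉ bigRows d) : hardWeight d i = 1 :=
  if_neg hi

theorem one_le_two_mul_cast (hd : 1 ≤ d) : (1 : ℝ) ≤ 2 * d := by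
  have : (1 : ℝ) ≤ d := by exact_mod_cast hd
  linarith

theorem one_le_sq_hardWeight (hd : 1 ≤ d) (i : Fin (d + 3)) : 1 ≤ hardWeight d i ^ 2 := by
  have := one_le_two_mul_cast hd
  unfold hardWeight; split_ifs <;> nlinarith

theorem rank2Err_hardA (hd : 1 ≤ d) : rank2Err (hardA d) = √(d + 1) := by
  apply le_antisymm
  · refine (rank2Err_monomialRows_le_sqrt _ _ card_bigRows.le fun i hi => ?_).trans_eq ?_
    · rw [hardWeight_of_notMem hi, one_pow]
    · rw [Fintype.card_fin, card_bigRows]; push_cast; ring_nf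
  · refine le_of_eq_of_le ?_ (sqrt_le_rank2Err_monomialRows (s := hardWeight d)
      (Fin.castSucc_injective _) (one_le_two_mul_cast hd) (one_le_sq_hardWeight hd)
      fun i hi => (sq_hardWeight_of_mem hi).ge)
    rw [Fintype.card_fin, card_bigRows]; push_cast; ring_nf

theorem rank2Err_hardB (hd : 1 ≤ d) : rank2Err (hardB d) = √(d - 1) := by
  rw [hardB, hardA, submatrix_monomialRows]
  apply le_antisymm
  · let K : Finset (Fin (d + 1)) := {⟨0, by omega⟩, ⟨1, by omega⟩}
    have hK : K.card = 2 := Finset.card_pair (Fin.ne_of_val_ne (by norm_num))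
    refine (rank2Err_monomialRows_le_sqrt _ _ hK.le fun i hi => ?_).trans_eq ?_
    · have hi' : (i : ℕ) ≠ 0 := fun h => hi (by simp [K, Fin.ext_iff, h])
      rw [Function.comp_apply, hardWeight_of_notMem (addNat_mem_bigRows_iff.not.mpr hi'),
        one_pow]
    · rw [Fintype.card_fin, hK]; push_cast; ring_nf
  · -- with a single big row, the bound for `K = ∅` is already tight
    refine le_of_eq_of_le ?_ (sqrt_le_rank2Err_monomialRows
      ((Fin.castSucc_injective _).comp fun _ _ => (Fin.addNat_inj 2).mp) le_rfl
      (fun i => one_le_sq_hardWeight hd _) (K := ∅) (by simp))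
    rw [Fintype.card_fin]; push_cast; ring_nf

theorem injective_sumElim_castSucc_last {m : ℕ} {ι : Type*} {σ : ι → Fin m}
    (hσ : Function.Injective σ) :
    Function.Injective (Sum.elim (Fin.castSucc ∘ σ) fun _ : Fin 1 => Fin.last m) :=
  ((Fin.castSucc_injective _).comp hσ).sumElim (Function.injective_of_subsingleton _)
    fun _ _ => Fin.castSucc_ne_last _

theorem sqrt_le_rank2Err_fromRows_hardA_hardRow (hd : 1 ≤ d) :
    √(4 * d ^ 2 + d + 1) ≤ rank2Err (fromRows (hardA d) (hardRow d)) := by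
  rw [hardA, hardRow, fromRows_monomialRows]
  refine le_of_eq_of_le ?_ (sqrt_le_rank2Err_monomialRows
    (injective_sumElim_castSucc_last (σ := id) Function.injective_id) (one_le_two_mul_cast hd)
    (K := (bigRows d).disjSum Finset.univ) ?_ ?_)
  · rw [Fintype.card_sum, Finset.card_disjSum, card_bigRows, Finset.card_univ]
    simp only [Fintype.card_fin]; push_cast; ring_nf
  · rintro (i | i)
    · exact one_le_sq_hardWeight hd i
    · simpa using pow_le_pow_left₀ zero_le_one (one_le_two_mul_cast hd) 2
  · rintro (i | i) hi
    · exact (sq_hardWeight_of_mem (Finset.inl_mem_disjSum.mp hi)).ge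
    · exact le_rfl

theorem rank2Err_fromRows_hardB_hardRow_le (hd : 1 ≤ d) :
    rank2Err (fromRows (hardB d) (hardRow d)) ≤ √d := by
  rw [hardB, hardA, hardRow, submatrix_monomialRows, fromRows_monomialRows]
  let K : Finset (Fin (d + 1) ⊕ Fin 1) :=
    ({⟨0, by omega⟩} : Finset (Fin (d + 1))).disjSum Finset.univ
  have hK : K.card = 2 := by simp [K]
  refine (rank2Err_monomialRows_le_sqrt _ _ hK.le ?_).trans_eq ?_
  · rintro (i | i) hi
    · have hi' : (i : ℕ) ≠ 0 := fun h => hi (by simp [K, Fin.ext_iff, h])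
      rw [Sum.elim_inl, Function.comp_apply,
        hardWeight_of_notMem (addNat_mem_bigRows_iff.not.mpr hi'), one_pow]
    · exact absurd (Finset.inr_mem_disjSum.mpr (Finset.mem_univ i)) hi
  · rw [Fintype.card_sum, Fintype.card_fin, Fintype.card_fin, hK]; push_cast; ring_nf

end HardInstance

/-- **Low-rank approximation is not smooth.**
For every `α ∈ (0,1)` there are matrices `A ∈ ℝ^{(d+3)×n}` and `B ∈ ℝ^{(d+1)×n}`, with `B`
the last `d+1` rows of `A`, and a row `c`, such that
`f(A) ≥ f(B) ≥ (1-α)·f(A) > 0` and yet `f(B∘c) ≤ (1/2)·f(A∘c)`,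
where `f` is the best rank-2 Frobenius approximation error. -/
theorem lowrank_not_smooth (α : ℝ) (hα0 : 0 < α) (hα1 : α < 1) :
    ∃ (n d : ℕ) (_ : 2 ≤ d)
      (A : Matrix (Fin (d + 3)) (Fin n) ℝ) (B : Matrix (Fin (d + 1)) (Fin n) ℝ)
      (c : Matrix (Fin 1) (Fin n) ℝ),
      (∀ i : Fin (d + 1), B i = A (i.addNat 2)) ∧
      rank2Err B ≤ rank2Err A ∧
      (1 - α) * rank2Err A ≤ rank2Err B ∧
      0 < (1 - α) * rank2Err A ∧
      rank2Err (Matrix.fromRows B c) ≤ (1 / 2) * rank2Err (Matrix.fromRows A c) := by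
  obtain ⟨d, hd, hαd⟩ : ∃ d : ℕ, 2 ≤ d ∧ 2 ≤ α * d := by
    obtain ⟨m, hm⟩ := exists_nat_gt (2 / α)
    refine ⟨m + 2, by omega, ?_⟩
    rw [div_lt_iff₀ hα0] at hm
    push_cast
    nlinarith
  have hd1 : 1 ≤ d := by omega
  have hD : (2 : ℝ) ≤ d := by exact_mod_cast hd
  refine ⟨d + 4, d, hd, hardA d, hardB d, hardRow d, fun _ => rfl, ?_, ?_, ?_, ?_⟩
  · rw [rank2Err_hardA hd1, rank2Err_hardB hd1]
    exact Real.sqrt_le_sqrt (by linarith)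
  · rw [rank2Err_hardA hd1, rank2Err_hardB hd1]
    calc (1 - α) * √(d + 1) = √((1 - α) ^ 2 * (d + 1)) := by
          rw [Real.sqrt_mul (sq_nonneg _), Real.sqrt_sq (by linarith)]
      _ ≤ √(d - 1) := Real.sqrt_le_sqrt (by nlinarith)
  · rw [rank2Err_hardA hd1]
    exact mul_pos (by linarith) (Real.sqrt_pos.2 (by linarith))
  · have hsqrt : 2 * √d ≤ √(4 * d ^ 2 + d + 1) := by
      rw [Real.le_sqrt (by positivity) (by positivity), mul_pow, Real.sq_sqrt (by positivity)]
      nlinarith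
    linarith [sqrt_le_rank2Err_fromRows_hardA_hardRow hd1,
      rank2Err_fromRows_hardB_hardRow_le hd1]
end

section
/- Let A ∈ ℝ^{m×n} have rows a_1,…,a_m, let p_1,…,p_m ∈ (0,1], and let ξ_1,…,ξ_m be independent random variables with ℙ(ξ_k = 1) = p_k and ℙ(ξ_k = 0) = 1−p_k. Define the random n×n matrix G = Σ_{k=1}^m (ξ_k/p_k)·a_kᵀa_k. Then 𝔼‖AᵀA − G‖_F² ≤ Σ_{k=1}^m ‖a_k‖₂⁴ / p_k. In particular, if c > 0 and p_k ≥ c·‖a_k‖₂²/‖A‖_F² for all k, then 𝔼‖AᵀA − G‖_F² ≤ (1/c)·‖A‖_F⁴. -/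
open Matrix MeasureTheory ProbabilityTheory

/-- The squared Frobenius norm `‖M‖_F²` of a real matrix. -/
noncomputable def frobNormSq {α β : Type*} [Fintype α] [Fintype β]
    (M : Matrix α β ℝ) : ℝ :=
  ∑ i, ∑ j, (M i j) ^ 2

/-- **Expectation bound for squared-norm row sampling.**
If `ξ k` are independent Bernoulli(`p k`) variables and
`G ω = ∑ k (ξ k ω / p k) • aₖᵀaₖ`, then `𝔼‖AᵀA − G‖_F² ≤ ∑ k ‖aₖ‖₂⁴ / p k`;
in particular, if `p k ≥ c‖aₖ‖₂²/‖A‖_F²` then `𝔼‖AᵀA − G‖_F² ≤ ‖A‖_F⁴/c`. -/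
theorem row_sampling_expectation_bound (m n : ℕ)
    (A : Matrix (Fin m) (Fin n) ℝ) (p : Fin m → ℝ)
    (hp0 : ∀ k, 0 < p k) (hp1 : ∀ k, p k ≤ 1)
    {Ω : Type*} [MeasurableSpace Ω] (μ : Measure Ω) [IsProbabilityMeasure μ]
    (ξ : Fin m → Ω → ℝ) (hmeas : ∀ k, Measurable (ξ k))
    (hindep : iIndepFun ξ μ)
    (hone : ∀ k, μ {ω | ξ k ω = 1} = ENNReal.ofReal (p k))
    (hzero : ∀ k, μ {ω | ξ k ω = 0} = ENNReal.ofReal (1 - p k)) :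
    (∫ ω, frobNormSq (Aᵀ * A
        - ∑ k : Fin m, (ξ k ω / p k) • vecMulVec (A k) (A k)) ∂μ)
      ≤ ∑ k : Fin m, (∑ j, (A k j) ^ 2) ^ 2 / p k ∧
    ∀ c : ℝ, 0 < c →
      (∀ k, c * (∑ j, (A k j) ^ 2) / frobNormSq A ≤ p k) →
      (∫ ω, frobNormSq (Aᵀ * A
          - ∑ k : Fin m, (ξ k ω / p k) • vecMulVec (A k) (A k)) ∂μ)
        ≤ (1 / c) * (frobNormSq A) ^ 2 := by
  classical
  -- a.e., each ξ k takes only the values 0 and 1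
  have haeB : ∀ k, ∀ᵐ ω ∂μ, ξ k ω = 0 ∨ ξ k ω = 1 := by
    intro k
    have hms0 : MeasurableSet {ω | ξ k ω = 0} := (hmeas k) (measurableSet_singleton 0)
    have hms1 : MeasurableSet {ω | ξ k ω = 1} := (hmeas k) (measurableSet_singleton 1)
    have hdisj : Disjoint {ω | ξ k ω = 0} {ω | ξ k ω = 1} := by
      rw [Set.disjoint_left]
      rintro ω h0 h1
      simp only [Set.mem_setOf_eq] at h0 h1
      rw [h0] at h1; norm_num at h1
    have hu : μ ({ω | ξ k ω = 0} ∪ {ω | ξ k ω = 1}) = 1 := by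
      rw [measure_union hdisj hms1, hzero k, hone k,
        ← ENNReal.ofReal_add (by linarith [hp1 k]) (hp0 k).le]
      norm_num
    have hc : μ ({ω | ξ k ω = 0} ∪ {ω | ξ k ω = 1})ᶜ = 0 := by
      rw [measure_compl (hms0.union hms1) (measure_ne_top μ _), hu, measure_univ]
      simp
    rw [ae_iff]
    refine measure_mono_null (fun ω hω => ?_) hc
    simp only [Set.mem_setOf_eq, not_or] at hω
    simp only [Set.mem_compl_iff, Set.mem_union, Set.mem_setOf_eq, not_or]
    exact ⟨hω.1, hω.2⟩
  -- ξ k is a.e. equal to the indicator of {ξ k = 1}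
  have hms1 : ∀ k, MeasurableSet {ω | ξ k ω = 1} := fun k =>
    (hmeas k) (measurableSet_singleton 1)
  have haeInd : ∀ k, ξ k =ᵐ[μ] ({ω | ξ k ω = 1}).indicator (fun _ => (1 : ℝ)) := by
    intro k
    filter_upwards [haeB k] with ω hω
    rcases hω with h | h
    · rw [h, Set.indicator_of_notMem]
      simp only [Set.mem_setOf_eq, h]; norm_num
    · rw [h, Set.indicator_of_mem]
      exact h
  have hintξ : ∀ k, Integrable (ξ k) μ := fun k =>
    ((integrable_const (1 : ℝ)).indicator (hms1 k)).congr
      (haeInd k).symm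
  have hEξ : ∀ k, ∫ ω, ξ k ω ∂μ = p k := by
    intro k
    rw [integral_congr_ae (haeInd k),
      integral_indicator_const (1 : ℝ) (hms1 k),
      measureReal_def, hone k, smul_eq_mul, mul_one, ENNReal.toReal_ofReal (hp0 k).le]
  have haeSq : ∀ k, (fun ω => ξ k ω * ξ k ω) =ᵐ[μ] ξ k := by
    intro k
    filter_upwards [haeB k] with ω hω
    rcases hω with h | h <;> rw [h] <;> norm_num
  have hintξξ : ∀ k l, Integrable (fun ω => ξ k ω * ξ l ω) μ := by
    intro k l
    have hae : (fun ω => ξ k ω * ξ l ω) =ᵐ[μ]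
        fun ω => ({ω | ξ k ω = 1}).indicator (fun _ => (1 : ℝ)) ω *
          ({ω | ξ l ω = 1}).indicator (fun _ => (1 : ℝ)) ω := by
      filter_upwards [haeInd k, haeInd l] with ω e1 e2
      rw [e1, e2]
    refine (Integrable.bdd_mul (c := 1)
      ((integrable_const (1 : ℝ)).indicator (hms1 l))
      ((measurable_const.indicator (hms1 k)).aestronglyMeasurable)
      (Filter.Eventually.of_forall fun ω => ?_)).congr hae.symm
    rw [Set.indicator_apply]
    split_ifs <;> simp
  have hEξξ : ∀ k l, ∫ ω, ξ k ω * ξ l ω ∂μ = if k = l then p k else p k * p l := by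
    intro k l
    by_cases h : k = l
    · subst h
      rw [if_pos rfl, integral_congr_ae (haeSq k), hEξ k]
    · rw [if_neg h]
      have hi := IndepFun.integral_mul_eq_mul_integral (hindep.indepFun h) (hintξ k).1 (hintξ l).1
      calc ∫ ω, ξ k ω * ξ l ω ∂μ = ∫ ω, (ξ k * ξ l) ω ∂μ := rfl
        _ = (∫ ω, ξ k ω ∂μ) * ∫ ω, ξ l ω ∂μ := hi
        _ = p k * p l := by rw [hEξ k, hEξ l]
  -- the centred variables x k = 1 - ξ k / p k
  have hintx : ∀ k, Integrable (fun ω => 1 - ξ k ω / p k) μ := fun k =>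
    (integrable_const (1 : ℝ)).sub ((hintξ k).div_const (p k))
  have hintxx : ∀ k l, Integrable (fun ω => (1 - ξ k ω / p k) * (1 - ξ l ω / p l)) μ := by
    intro k l
    have hre : (fun ω => (1 - ξ k ω / p k) * (1 - ξ l ω / p l)) =
        fun ω => 1 - ξ k ω / p k - ξ l ω / p l + (ξ k ω * ξ l ω) / (p k * p l) := by
      funext ω; ring
    rw [hre]
    exact (((integrable_const (1 : ℝ)).sub ((hintξ k).div_const _)).sub
      ((hintξ l).div_const _)).add ((hintξξ k l).div_const _)
  have hExx : ∀ k l, ∫ ω, (1 - ξ k ω / p k) * (1 - ξ l ω / p l) ∂μ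
      = if k = l then 1 / p k - 1 else 0 := by
    intro k l
    have hre : (fun ω => (1 - ξ k ω / p k) * (1 - ξ l ω / p l)) =
        fun ω => 1 - ξ k ω / p k - ξ l ω / p l + (ξ k ω * ξ l ω) / (p k * p l) := by
      funext ω; ring
    have : ∫ ω, (1 - ξ k ω / p k) * (1 - ξ l ω / p l) ∂μ =
        ∫ ω, (1 - ξ k ω / p k - ξ l ω / p l + (ξ k ω * ξ l ω) / (p k * p l)) ∂μ := by
      rw [hre]
    have e1 : ∫ (_ : Ω), (1 : ℝ) ∂μ = 1 := by simp
    have e2 : ∫ ω, ξ k ω / p k ∂μ = 1 := by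
      rw [integral_div, hEξ k, div_self (hp0 k).ne']
    have e3 : ∫ ω, ξ l ω / p l ∂μ = 1 := by
      rw [integral_div, hEξ l, div_self (hp0 l).ne']
    have e4 : ∫ ω, (ξ k ω * ξ l ω) / (p k * p l) ∂μ
        = (if k = l then p k else p k * p l) / (p k * p l) := by
      rw [integral_div, hEξξ k l]
    have iA : Integrable (fun ω => 1 - ξ k ω / p k) μ := hintx k
    have iB : Integrable (fun ω => 1 - ξ k ω / p k - ξ l ω / p l) μ := by
      exact iA.sub ((hintξ l).div_const _)
    have iC : Integrable (fun ω => ξ k ω * ξ l ω / (p k * p l)) μ := by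
      exact (hintξξ k l).div_const _
    rw [this, integral_add iB iC,
      integral_sub iA ((hintξ l).div_const _),
      integral_sub (integrable_const (1 : ℝ)) ((hintξ k).div_const _),
      e1, e2, e3, e4]
    by_cases h : k = l
    · subst h
      rw [if_pos rfl, if_pos rfl]
      have h0 := (hp0 k).ne'
      field_simp
      ring
    · rw [if_neg h, if_neg h]
      have h0 := (hp0 k).ne'
      have h1 := (hp0 l).ne'
      field_simp
      norm_num
  -- pointwise expansion of the squared Frobenius norm
  have hpt : ∀ ω, frobNormSq (Aᵀ * A - ∑ k : Fin m, (ξ k ω / p k) • vecMulVec (A k) (A k))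
      = ∑ i, ∑ j, ∑ k, ∑ l, ((A k i * A k j) * (A l i * A l j)) *
          ((1 - ξ k ω / p k) * (1 - ξ l ω / p l)) := by
    intro ω
    have hentry : ∀ i j,
        (Aᵀ * A - ∑ k : Fin m, (ξ k ω / p k) • vecMulVec (A k) (A k)) i j
        = ∑ k, (1 - ξ k ω / p k) * (A k i * A k j) := by
      intro i j
      simp only [Matrix.sub_apply, Matrix.mul_apply, Matrix.transpose_apply, Matrix.sum_apply,
        Matrix.smul_apply, Matrix.vecMulVec_apply, smul_eq_mul]
      rw [← Finset.sum_sub_distrib]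
      exact Finset.sum_congr rfl fun k _ => by ring
    simp only [frobNormSq, hentry]
    refine Finset.sum_congr rfl fun i _ => Finset.sum_congr rfl fun j _ => ?_
    rw [sq, Finset.sum_mul_sum]
    exact Finset.sum_congr rfl fun k _ => Finset.sum_congr rfl fun l _ => by ring
  -- compute the expectation exactly
  have hmain : (∫ ω, frobNormSq (Aᵀ * A
      - ∑ k : Fin m, (ξ k ω / p k) • vecMulVec (A k) (A k)) ∂μ)
      = ∑ k, (1 / p k - 1) * (∑ j, (A k j) ^ 2) ^ 2 := by
    have step1 : (∫ ω, frobNormSq (Aᵀ * A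
        - ∑ k : Fin m, (ξ k ω / p k) • vecMulVec (A k) (A k)) ∂μ)
        = ∑ i, ∑ j, ∑ k, ∑ l, ((A k i * A k j) * (A l i * A l j)) *
            ∫ ω, (1 - ξ k ω / p k) * (1 - ξ l ω / p l) ∂μ := by
      rw [integral_congr_ae (Filter.EventuallyEq.of_eq (funext hpt))]
      rw [integral_finset_sum _ (fun i _ => integrable_finset_sum _ fun j _ =>
        integrable_finset_sum _ fun k _ => integrable_finset_sum _ fun l _ =>
          (hintxx k l).const_mul _)]
      refine Finset.sum_congr rfl fun i _ => ?_
      rw [integral_finset_sum _ (fun j _ => integrable_finset_sum _ fun k _ =>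
        integrable_finset_sum _ fun l _ => (hintxx k l).const_mul _)]
      refine Finset.sum_congr rfl fun j _ => ?_
      rw [integral_finset_sum _ (fun k _ => integrable_finset_sum _ fun l _ =>
        (hintxx k l).const_mul _)]
      refine Finset.sum_congr rfl fun k _ => ?_
      rw [integral_finset_sum _ (fun l _ => (hintxx k l).const_mul _)]
      exact Finset.sum_congr rfl fun l _ => integral_const_mul _ _
    rw [step1]
    simp only [hExx, mul_ite, mul_zero, Finset.sum_ite_eq, Finset.mem_univ, if_true]
    calc ∑ i, ∑ j, ∑ k, ((A k i * A k j) * (A k i * A k j)) * (1 / p k - 1)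
        = ∑ i, ∑ k, ∑ j, ((A k i * A k j) * (A k i * A k j)) * (1 / p k - 1) :=
          Finset.sum_congr rfl fun i _ => Finset.sum_comm
      _ = ∑ k, ∑ i, ∑ j, ((A k i * A k j) * (A k i * A k j)) * (1 / p k - 1) :=
          Finset.sum_comm
      _ = ∑ k, (1 / p k - 1) * (∑ j, (A k j) ^ 2) ^ 2 := by
          refine Finset.sum_congr rfl fun k _ => ?_
          have : (∑ j, (A k j) ^ 2) ^ 2 = ∑ i, ∑ j, (A k i) ^ 2 * (A k j) ^ 2 := by
            rw [sq, Finset.sum_mul_sum]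
          rw [this, Finset.mul_sum]
          refine Finset.sum_congr rfl fun i _ => ?_
          rw [Finset.mul_sum]
          exact Finset.sum_congr rfl fun j _ => by ring
  have hbound : (∫ ω, frobNormSq (Aᵀ * A
      - ∑ k : Fin m, (ξ k ω / p k) • vecMulVec (A k) (A k)) ∂μ)
      ≤ ∑ k : Fin m, (∑ j, (A k j) ^ 2) ^ 2 / p k := by
    rw [hmain]
    refine Finset.sum_le_sum fun k _ => ?_
    have hs2 : (0 : ℝ) ≤ (∑ j, (A k j) ^ 2) ^ 2 := sq_nonneg _
    calc (1 / p k - 1) * (∑ j, (A k j) ^ 2) ^ 2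
        ≤ (1 / p k) * (∑ j, (A k j) ^ 2) ^ 2 :=
          mul_le_mul_of_nonneg_right (by linarith) hs2
      _ = (∑ j, (A k j) ^ 2) ^ 2 / p k := by rw [one_div, inv_mul_eq_div]
  refine ⟨hbound, ?_⟩
  intro c hc hpc
  rw [hmain]
  have hFnn : (0 : ℝ) ≤ frobNormSq A :=
    Finset.sum_nonneg fun i _ => Finset.sum_nonneg fun j _ => sq_nonneg _
  by_cases hF : frobNormSq A = 0
  · have hrow : ∀ k, (∑ j, (A k j) ^ 2) = 0 := by
      intro k
      have h := (Finset.sum_eq_zero_iff_of_nonneg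
        (fun i _ => Finset.sum_nonneg fun j _ => sq_nonneg (A i j))).mp hF
      exact h k (Finset.mem_univ k)
    simp [hrow, hF]
  · have hFpos : 0 < frobNormSq A := lt_of_le_of_ne hFnn (Ne.symm hF)
    calc ∑ k, (1 / p k - 1) * (∑ j, (A k j) ^ 2) ^ 2
        ≤ ∑ k, (1 / c) * (frobNormSq A) * (∑ j, (A k j) ^ 2) := by
          refine Finset.sum_le_sum fun k _ => ?_
          have hsnn : (0 : ℝ) ≤ ∑ j, (A k j) ^ 2 :=
            Finset.sum_nonneg fun j _ => sq_nonneg _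
          rcases eq_or_lt_of_le hsnn with h0 | hpos
          · rw [← h0]; simp
          · have h1 : 0 < c * (∑ j, (A k j) ^ 2) / frobNormSq A := by positivity
            have h2 : (p k)⁻¹ ≤ frobNormSq A / (c * (∑ j, (A k j) ^ 2)) := by
              have := inv_anti₀ h1 (hpc k)
              rwa [inv_div] at this
            calc (1 / p k - 1) * (∑ j, (A k j) ^ 2) ^ 2
                ≤ (p k)⁻¹ * (∑ j, (A k j) ^ 2) ^ 2 := by
                  refine mul_le_mul_of_nonneg_right ?_ (sq_nonneg _)
                  rw [one_div]; linarith
              _ ≤ (frobNormSq A / (c * (∑ j, (A k j) ^ 2))) * (∑ j, (A k j) ^ 2) ^ 2 :=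
                  mul_le_mul_of_nonneg_right h2 (sq_nonneg _)
              _ = (1 / c) * (frobNormSq A) * (∑ j, (A k j) ^ 2) := by
                  field_simp
      _ = (1 / c) * (frobNormSq A) * ∑ k, ∑ j, (A k j) ^ 2 := by
          rw [Finset.mul_sum]
      _ = (1 / c) * (frobNormSq A) ^ 2 := by
          rw [show (∑ k, ∑ j, (A k j) ^ 2) = frobNormSq A from rfl]
          ring
end

section
/- Let M ∈ ℝ^{m×n} and C ∈ ℝ^{d×n}, let ε ≥ 0, and suppose (1−ε)·MᵀM ⪯ CᵀC ⪯ (1+ε)·MᵀM in the Loewner order. Then for every orthogonal projection matrix P ∈ ℝ^{n×n} (Pᵀ = P and P² = P): (1−ε)·‖M − MP‖_F² ≤ ‖C − CP‖_F² ≤ (1+ε)·‖M − MP‖_F². In particular, a (1±ε) spectral approximation of M preserves all projection costs of M up to a (1±ε) factor. -/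
/-! `‖A Q‖_F² = tr (Qᵀ (AᵀA) Q)`, and the congruence `X ↦ Qᵀ X Q` followed by the trace is monotone
for the Loewner order; with `Q = I - P` this carries the sandwich on `MᵀM` over to the costs. -/

open Matrix

section

variable {l m n k : Type*} [Fintype l] [Fintype m] [Fintype n] [Fintype k]

lemma frobNormSq_eq_trace_transpose_mul (A : Matrix m n ℝ) :
    frobNormSq A = (Aᵀ * A).trace := by
  rw [trace, frobNormSq, Finset.sum_comm]
  simp [mul_apply, sq]

lemma frobNormSq_mul_eq_trace (A : Matrix m n ℝ) (Q : Matrix n k ℝ) :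
    frobNormSq (A * Q) = (Qᵀ * (Aᵀ * A) * Q).trace := by
  rw [frobNormSq_eq_trace_transpose_mul, transpose_mul, Matrix.mul_assoc, Matrix.mul_assoc,
    Matrix.mul_assoc]

lemma trace_transpose_mul_mul_le_of_posSemidef_sub {X Y : Matrix n n ℝ}
    (hXY : (X - Y).PosSemidef) (Q : Matrix n k ℝ) :
    (Qᵀ * Y * Q).trace ≤ (Qᵀ * X * Q).trace := by
  have h := (hXY.conjTranspose_mul_mul_same Q).trace_nonneg
  rw [conjTranspose_eq_transpose_of_trivial, Matrix.mul_sub, Matrix.sub_mul, trace_sub] at h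
  linarith

lemma smul_frobNormSq_mul_le_of_posSemidef (A : Matrix m n ℝ) (B : Matrix l n ℝ) (c : ℝ)
    (h : (Bᵀ * B - c • (Aᵀ * A)).PosSemidef) (Q : Matrix n k ℝ) :
    c * frobNormSq (A * Q) ≤ frobNormSq (B * Q) := by
  simpa [frobNormSq_mul_eq_trace, trace_smul] using
    trace_transpose_mul_mul_le_of_posSemidef_sub h Q

lemma frobNormSq_mul_le_smul_of_posSemidef (A : Matrix m n ℝ) (B : Matrix l n ℝ) (c : ℝ)
    (h : (c • (Aᵀ * A) - Bᵀ * B).PosSemidef) (Q : Matrix n k ℝ) :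
    frobNormSq (B * Q) ≤ c * frobNormSq (A * Q) := by
  simpa [frobNormSq_mul_eq_trace, trace_smul] using
    trace_transpose_mul_mul_le_of_posSemidef_sub h Q

end

theorem spectral_approx_preserves_projection_costs_general (m d n : ℕ) (ε : ℝ)
    (M : Matrix (Fin m) (Fin n) ℝ) (C : Matrix (Fin d) (Fin n) ℝ)
    (h1 : (Cᵀ * C - (1 - ε) • (Mᵀ * M)).PosSemidef)
    (h2 : ((1 + ε) • (Mᵀ * M) - Cᵀ * C).PosSemidef) :
    ∀ P : Matrix (Fin n) (Fin n) ℝ, Pᵀ = P → P * P = P →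
      (1 - ε) * frobNormSq (M - M * P) ≤ frobNormSq (C - C * P) ∧
      frobNormSq (C - C * P) ≤ (1 + ε) * frobNormSq (M - M * P) := by
  intro P _ _
  have residual_eq {a : ℕ} (A : Matrix (Fin a) (Fin n) ℝ) : A - A * P = A * (1 - P) := by
    rw [Matrix.mul_sub, Matrix.mul_one]
  rw [residual_eq M, residual_eq C]
  exact ⟨smul_frobNormSq_mul_le_of_posSemidef M C _ h1 _,
    frobNormSq_mul_le_smul_of_posSemidef M C _ h2 _⟩

/-- **Spectral approximation preserves projection costs.**
If `(1-ε)·MᵀM ⪯ CᵀC ⪯ (1+ε)·MᵀM`, then for every orthogonal projection `P`,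
`(1-ε)‖M−MP‖_F² ≤ ‖C−CP‖_F² ≤ (1+ε)‖M−MP‖_F²`. -/
theorem spectral_approx_preserves_projection_costs (m d n : ℕ) (ε : ℝ) (hε : 0 ≤ ε)
    (M : Matrix (Fin m) (Fin n) ℝ) (C : Matrix (Fin d) (Fin n) ℝ)
    (h1 : (Cᵀ * C - (1 - ε) • (Mᵀ * M)).PosSemidef)
    (h2 : ((1 + ε) • (Mᵀ * M) - Cᵀ * C).PosSemidef) :
    ∀ P : Matrix (Fin n) (Fin n) ℝ, Pᵀ = P → P * P = P →
      (1 - ε) * frobNormSq (M - M * P) ≤ frobNormSq (C - C * P) ∧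
      frobNormSq (C - C * P) ≤ (1 + ε) * frobNormSq (M - M * P) :=
  spectral_approx_preserves_projection_costs_general m d n ε M C h1 h2
end

section
/- Let 0 < ε ≤ 1. Let A be the matrix obtained by stacking a matrix D on top of a matrix B (so B is a suffix of the rows of A), and let C be any matrix with the same number of columns as A. Write A∘C and B∘C for the matrices obtained by appending the rows of C below A and below B, respectively. If ‖B‖_F ≥ (1−ε²/4)·‖A‖_F, then ‖B∘C‖_F ≥ (1−ε)·‖A∘C‖_F. That is, the Frobenius norm is an (ε, ε²/4)-smooth function. -/
/-!
Squared Frobenius norms add when rows are stacked. If `s ∈ [0, 1]` and `s‖A‖ ≤ ‖B‖`, then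
`s²(‖A‖² + ‖C‖²) ≤ ‖B‖² + ‖C‖²`, because the first summand is controlled by the hypothesis and the
second by `s² ≤ 1`. Since `1 - ε ≤ 1 - ε²/4` for `0 < ε ≤ 1`, the hypothesis of the theorem gives
`(1 - ε)‖A‖_F ≤ ‖B‖_F`, and the claim is this with `s = 1 - ε`.
-/

open Matrix

section FrobNorm

variable {α α' β : Type*} [Fintype α] [Fintype α'] [Fintype β]

lemma frobNorm_nonneg (M : Matrix α β ℝ) : 0 ≤ frobNorm M :=
  Real.sqrt_nonneg _

lemma frobNorm_sq (M : Matrix α β ℝ) : frobNorm M ^ 2 = ∑ i, ∑ j, M i j ^ 2 :=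
  Real.sq_sqrt <| Finset.sum_nonneg fun _ _ => Finset.sum_nonneg fun _ _ => sq_nonneg _

lemma frobNorm_fromRows (M : Matrix α β ℝ) (N : Matrix α' β ℝ) :
    frobNorm (fromRows M N) = Real.sqrt (frobNorm M ^ 2 + frobNorm N ^ 2) := by
  rw [frobNorm_sq, frobNorm_sq, frobNorm, Fintype.sum_sum_type]
  rfl

end FrobNorm

lemma mul_sqrt_sq_add_sq_le {s x y z : ℝ} (hs₀ : 0 ≤ s) (hs₁ : s ≤ 1) (hx : 0 ≤ x)
    (hsxy : s * x ≤ y) :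
    s * Real.sqrt (x ^ 2 + z ^ 2) ≤ Real.sqrt (y ^ 2 + z ^ 2) := by
  have hsx : (s * x) ^ 2 ≤ y ^ 2 := pow_le_pow_left₀ (mul_nonneg hs₀ hx) hsxy 2
  have hs : s ^ 2 * z ^ 2 ≤ z ^ 2 := mul_le_of_le_one_left (sq_nonneg z) (pow_le_one₀ hs₀ hs₁)
  rw [← Real.sqrt_sq hs₀, ← Real.sqrt_mul (sq_nonneg s)]
  exact Real.sqrt_le_sqrt (by nlinarith)

theorem frobNorm_fromRows_smooth {α α' α'' β : Type*} [Fintype α] [Fintype α'] [Fintype α'']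
    [Fintype β] {s : ℝ} (hs₀ : 0 ≤ s) (hs₁ : s ≤ 1) {A : Matrix α β ℝ} {B : Matrix α' β ℝ}
    (hAB : s * frobNorm A ≤ frobNorm B) (C : Matrix α'' β ℝ) :
    s * frobNorm (fromRows A C) ≤ frobNorm (fromRows B C) := by
  rw [frobNorm_fromRows, frobNorm_fromRows]
  exact mul_sqrt_sq_add_sq_le hs₀ hs₁ (frobNorm_nonneg A) hAB

/-- **The Frobenius norm is `(ε, ε²/4)`-smooth.**
With `A = D∘B` (so `B` is a suffix of the rows of `A`) and any later block `C`:
if `‖B‖_F ≥ (1 - ε²/4)‖A‖_F` then `‖B∘C‖_F ≥ (1-ε)‖A∘C‖_F`. -/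
theorem frobenius_norm_smooth (p q r n : ℕ) (ε : ℝ) (hε0 : 0 < ε) (hε1 : ε ≤ 1)
    (D : Matrix (Fin p) (Fin n) ℝ) (B : Matrix (Fin q) (Fin n) ℝ)
    (C : Matrix (Fin r) (Fin n) ℝ)
    (h : (1 - ε ^ 2 / 4) * frobNorm (Matrix.fromRows D B) ≤ frobNorm B) :
    (1 - ε) * frobNorm (Matrix.fromRows (Matrix.fromRows D B) C) ≤
      frobNorm (Matrix.fromRows B C) := by
  have hε : 1 - ε ≤ 1 - ε ^ 2 / 4 := by nlinarith
  have hDB : (1 - ε) * frobNorm (fromRows D B) ≤ frobNorm B :=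
    (mul_le_mul_of_nonneg_right hε (frobNorm_nonneg _)).trans h
  exact frobNorm_fromRows_smooth (by linarith) (by linarith) hDB C
end

section
/- Let 0 < ε ≤ 1/2, let λ, λ′, λ̃ > 0 with λ ≤ λ′ and λ′/4 ≤ λ̃ ≤ λ′, and let M and M̃ be symmetric positive semidefinite n×n real matrices satisfying (1−ε)(M+λI) ⪯ M̃+λI ⪯ (1+ε)(M+λI) in the Loewner order. Then for every row vector a ∈ ℝ^{1×n}: ((1−ε)/4)·(M + aᵀa + λ′I) ⪯ M̃ + aᵀa + λ̃I ⪯ (1+ε)·(M + aᵀa + λ′I), and consequently for every row vector v ∈ ℝ^{1×n}: (1/2)·v(M + aᵀa + λ′I)^{−1}vᵀ ≤ v(M̃ + aᵀa + λ̃I)^{−1}vᵀ ≤ 8·v(M + aᵀa + λ′I)^{−1}vᵀ. -/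
/-!
Adding the PSD matrix `aᵀa` to both sides of the hypotheses and absorbing the change of ridge
parameter into the slack `(λ' - λ) I` (using `λ ≤ λ'` and `λ'/4 ≤ λ̃ ≤ λ'`) gives the two Loewner
bounds. The bounds on inverse quadratic forms then follow because `X ↦ vᵀX⁻¹v` is antitone on
positive definite matrices, which is immediate from the variational formula
`vᵀX⁻¹v = max_u (2 uᵀv - uᵀXu)`.
-/

open Matrix
open scoped MatrixOrder

namespace Matrix

variable {n : Type*} [Fintype n] [DecidableEq n]

theorem PosDef.mulVec_inv_mulVec {X : Matrix n n ℝ} (hX : X.PosDef) (v : n → ℝ) :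
    X *ᵥ (X⁻¹ *ᵥ v) = v := by
  rw [mulVec_mulVec, mul_nonsing_inv X (isUnit_iff_isUnit_det X |>.mp hX.isUnit), one_mulVec]

theorem PosDef.dotProduct_inv_mulVec_nonneg {X : Matrix n n ℝ} (hX : X.PosDef) (v : n → ℝ) :
    0 ≤ v ⬝ᵥ X⁻¹ *ᵥ v := by
  simpa using hX.inv.posSemidef.dotProduct_mulVec_nonneg v

theorem PosDef.two_mul_dotProduct_sub_le {X : Matrix n n ℝ} (hX : X.PosDef) (u v : n → ℝ) :
    2 * (u ⬝ᵥ v) - u ⬝ᵥ X *ᵥ u ≤ v ⬝ᵥ X⁻¹ *ᵥ v := by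
  set w := X⁻¹ *ᵥ v
  have hXw : X *ᵥ w = v := hX.mulVec_inv_mulVec v
  have hsymm : w ⬝ᵥ X *ᵥ u = u ⬝ᵥ X *ᵥ w := by
    rw [dotProduct_mulVec, ← mulVec_transpose, dotProduct_comm,
      (isHermitian_iff_isSymm.mp hX.isHermitian).eq]
  have hsq : 0 ≤ (u - w) ⬝ᵥ X *ᵥ (u - w) := by
    simpa using hX.posSemidef.dotProduct_mulVec_nonneg (u - w)
  simp only [mulVec_sub, sub_dotProduct, dotProduct_sub, hsymm, hXw] at hsq
  rw [dotProduct_comm v w]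
  linarith

theorem PosDef.dotProduct_inv_mulVec_antitone {X Y : Matrix n n ℝ} (hX : X.PosDef) (hXY : X ≤ Y)
    (v : n → ℝ) : v ⬝ᵥ Y⁻¹ *ᵥ v ≤ v ⬝ᵥ X⁻¹ *ᵥ v := by
  have hY : Y.PosDef := by simpa using hX.add_posSemidef (le_iff.mp hXY)
  set u := Y⁻¹ *ᵥ v
  have hYu : u ⬝ᵥ Y *ᵥ u = v ⬝ᵥ Y⁻¹ *ᵥ v := by rw [hY.mulVec_inv_mulVec, dotProduct_comm]
  have hXu : u ⬝ᵥ X *ᵥ u ≤ u ⬝ᵥ Y *ᵥ u := by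
    simpa [sub_mulVec] using (le_iff.mp hXY).dotProduct_mulVec_nonneg u
  have := hX.two_mul_dotProduct_sub_le u v
  rw [dotProduct_comm u v] at this
  linarith

theorem PosDef.dotProduct_inv_mulVec_le_of_le_smul {X Y : Matrix n n ℝ} {c : ℝ} (hc : 0 < c)
    (hX : X.PosDef) (h : X ≤ c • Y) (v : n → ℝ) :
    v ⬝ᵥ Y⁻¹ *ᵥ v ≤ c * (v ⬝ᵥ X⁻¹ *ᵥ v) := by
  have hcY : (c • Y).PosDef := by simpa using hX.add_posSemidef (le_iff.mp h)
  have hY : Y.PosDef := by simpa [smul_smul, hc.ne'] using hcY.smul (inv_pos.2 hc)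
  have hinv : (c • Y)⁻¹ = c⁻¹ • Y⁻¹ := by
    simpa [Units.smul_def] using
      inv_smul' Y (Units.mk0 c hc.ne') ((isUnit_iff_isUnit_det Y).mp hY.isUnit)
  have := hX.dotProduct_inv_mulVec_antitone h v
  rwa [hinv, smul_mulVec, dotProduct_smul, smul_eq_mul, inv_mul_le_iff₀ hc] at this

theorem add_add_smul_one_le_smul_add_add_smul_one {M Mt P : Matrix n n ℝ} {ε lam lam' lamt : ℝ}
    (hε : 0 ≤ ε) (hle : lam ≤ lam') (hhigh : lamt ≤ lam') (hP : P.PosSemidef)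
    (h : Mt + lam • 1 ≤ (1 + ε) • (M + lam • 1)) :
    Mt + P + lamt • 1 ≤ (1 + ε) • (M + P + lam' • 1) :=
  calc Mt + P + lamt • 1 = (Mt + lam • 1) + P + (lamt - lam) • (1 : Matrix n n ℝ) := by module
    _ ≤ (1 + ε) • (M + lam • 1) + (1 + ε) • P + ((1 + ε) * (lam' - lam)) • 1 := by
      gcongr
      · exact le_smul_of_one_le_left hP.nonneg (by linarith)
      · nlinarith
    _ = (1 + ε) • (M + P + lam' • 1) := by module

theorem smul_add_add_smul_one_le_add_add_smul_one {M Mt P : Matrix n n ℝ} {ε lam lam' lamt : ℝ}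
    (hε : 0 ≤ ε) (hle : lam ≤ lam') (hlow : lam' / 4 ≤ lamt) (hMt : Mt.PosSemidef)
    (hP : P.PosSemidef) (h : (1 - ε) • (M + lam • 1) ≤ Mt + lam • 1) :
    ((1 - ε) / 4) • (M + P + lam' • 1) ≤ Mt + P + lamt • 1 :=
  calc ((1 - ε) / 4) • (M + P + lam' • 1)
      = (1 / 4 : ℝ) • ((1 - ε) • (M + lam • 1)) + ((1 - ε) / 4) • P
          + ((1 - ε) / 4 * (lam' - lam)) • (1 : Matrix n n ℝ) := by module
    _ ≤ (1 / 4 : ℝ) • (Mt + lam • 1) + P + ((lam' - lam) / 4) • 1 := by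
      gcongr
      · exact smul_le_of_le_one_left hP.nonneg (by linarith)
      · nlinarith
    _ = (1 / 4 : ℝ) • Mt + P + (lam' / 4) • 1 := by module
    _ ≤ Mt + P + lamt • 1 := by
      gcongr
      exact smul_le_of_le_one_left hMt.nonneg (by norm_num)

end Matrix

theorem online_lowrank_invariant_general (n : ℕ) (ε lam lam' lamt : ℝ)
    (hε0 : 0 < ε) (hε : ε ≤ 1 / 2)
    (hlam' : 0 < lam') (hlamt : 0 < lamt)
    (hle : lam ≤ lam') (hlow : lam' / 4 ≤ lamt) (hhigh : lamt ≤ lam')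
    (M Mt : Matrix (Fin n) (Fin n) ℝ) (hM : M.PosSemidef) (hMt : Mt.PosSemidef)
    (h1 : ((Mt + lam • 1) - (1 - ε) • (M + lam • 1)).PosSemidef)
    (h2 : ((1 + ε) • (M + lam • 1) - (Mt + lam • 1)).PosSemidef) :
    ∀ a : Fin n → ℝ,
      ((Mt + vecMulVec a a + lamt • 1)
        - ((1 - ε) / 4) • (M + vecMulVec a a + lam' • 1)).PosSemidef ∧
      ((1 + ε) • (M + vecMulVec a a + lam' • 1)
        - (Mt + vecMulVec a a + lamt • 1)).PosSemidef ∧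
      ∀ v : Fin n → ℝ,
        (1 / 2) * (v ⬝ᵥ ((M + vecMulVec a a + lam' • 1)⁻¹ *ᵥ v)) ≤
          v ⬝ᵥ ((Mt + vecMulVec a a + lamt • 1)⁻¹ *ᵥ v) ∧
        v ⬝ᵥ ((Mt + vecMulVec a a + lamt • 1)⁻¹ *ᵥ v) ≤
          8 * (v ⬝ᵥ ((M + vecMulVec a a + lam' • 1)⁻¹ *ᵥ v)) := by
  intro a
  have hP : (vecMulVec a a).PosSemidef := by simpa using posSemidef_vecMulVec_self_star a
  have hA : (M + vecMulVec a a + lam' • 1).PosDef :=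
    .posSemidef_add (hM.add hP) (.smul .one hlam')
  have hB : (Mt + vecMulVec a a + lamt • 1).PosDef :=
    .posSemidef_add (hMt.add hP) (.smul .one hlamt)
  have lower := smul_add_add_smul_one_le_add_add_smul_one hε0.le hle hlow hMt hP h1
  have upper := add_add_smul_one_le_smul_add_add_smul_one hε0.le hle hhigh hP h2
  have hc : 0 < (1 - ε) / 4 := by linarith
  refine ⟨lower, upper, fun v => ⟨?_, ?_⟩⟩
  · have hqB := hB.dotProduct_inv_mulVec_nonneg v
    have := hB.dotProduct_inv_mulVec_le_of_le_smul (by linarith) upper v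
    nlinarith
  · have hqA := hA.dotProduct_inv_mulVec_nonneg v
    have := hA.dotProduct_inv_mulVec_le_of_le_smul (inv_pos.2 hc)
      ((le_inv_smul_iff_of_pos hc).2 lower) v
    calc _ ≤ ((1 - ε) / 4)⁻¹ * _ := this
      _ ≤ 8 * _ := by
        gcongr
        rw [inv_div, div_le_iff₀ (by linarith)]
        linarith

/-- **Invariant for online low-rank approximation.**
If `(1-ε)(M+λI) ⪯ M̃+λI ⪯ (1+ε)(M+λI)` with `0 < ε ≤ 1/2`, `0 < λ ≤ λ'`, and
`λ'/4 ≤ λ̃ ≤ λ'`, then for every row `a`: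
`((1-ε)/4)(M+aᵀa+λ'I) ⪯ M̃+aᵀa+λ̃I ⪯ (1+ε)(M+aᵀa+λ'I)`, and consequently the
corresponding inverse quadratic forms agree up to factors `1/2` and `8`. -/
theorem online_lowrank_invariant (n : ℕ) (ε lam lam' lamt : ℝ)
    (hε0 : 0 < ε) (hε : ε ≤ 1 / 2)
    (hlam : 0 < lam) (hlam' : 0 < lam') (hlamt : 0 < lamt)
    (hle : lam ≤ lam') (hlow : lam' / 4 ≤ lamt) (hhigh : lamt ≤ lam')
    (M Mt : Matrix (Fin n) (Fin n) ℝ) (hM : M.PosSemidef) (hMt : Mt.PosSemidef)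
    (h1 : ((Mt + lam • 1) - (1 - ε) • (M + lam • 1)).PosSemidef)
    (h2 : ((1 + ε) • (M + lam • 1) - (Mt + lam • 1)).PosSemidef) :
    ∀ a : Fin n → ℝ,
      ((Mt + vecMulVec a a + lamt • 1)
        - ((1 - ε) / 4) • (M + vecMulVec a a + lam' • 1)).PosSemidef ∧
      ((1 + ε) • (M + vecMulVec a a + lam' • 1)
        - (Mt + vecMulVec a a + lamt • 1)).PosSemidef ∧
      ∀ v : Fin n → ℝ,
        (1 / 2) * (v ⬝ᵥ ((M + vecMulVec a a + lam' • 1)⁻¹ *ᵥ v)) ≤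
          v ⬝ᵥ ((Mt + vecMulVec a a + lamt • 1)⁻¹ *ᵥ v) ∧
        v ⬝ᵥ ((Mt + vecMulVec a a + lamt • 1)⁻¹ *ᵥ v) ≤
          8 * (v ⬝ᵥ ((M + vecMulVec a a + lam' • 1)⁻¹ *ᵥ v)) :=
  online_lowrank_invariant_general n ε lam lam' lamt hε0 hε hlam' hlamt hle hlow hhigh M Mt hM hMt
    h1 h2
end
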